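/- arXiv:2505.19871 — 5 statements merged into one kernel-verified Lean document; each statement's English description precedes it below -/
import Mathlib

section
/- Let G be a finite simple graph, C a clique of G of size s, and suppose: (1) every clique of the induced subgraph G − C has size at most c; (2) every vertex outside C has at most d neighbors in C; and (3) d < s − c. Then the only clique of G of size s is C itself. -/
open Finset

/-- Let `C` be a clique of size `s` in a finite simple graph `G`.  If every clique of the
induced subgraph `G − C` has size at most `c`, every vertex outside `C` has at most `d`
neighbors in `C`, and `d < s - c`, then `C` is the unique clique of size `s` in `G`. -/
theorem unique_clique {V : Type*} [Fintype V] [DecidableEq V] (G : SimpleGraph V)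
    [DecidableRel G.Adj] (C : Finset V) (s c d : ℕ)
    (hC : G.IsNClique s C)
    (h1 : ∀ K : Finset V, (∀ v ∈ K, v ∉ C) → G.IsClique (K : Set V) → K.card ≤ c)
    (h2 : ∀ v, v ∉ C → (C.filter fun u => G.Adj v u).card ≤ d)
    (h3 : d < s - c) :
    ∀ K : Finset V, G.IsNClique s K → K = C := by
  intro K hK
  have hKclique : G.IsClique (K : Set V) := hK.1
  have hKcard : K.card = s := hK.2
  have hCcard : C.card = s := hC.2
  have hA : (K \ C).card ≤ c := by
    apply h1
    · intro v hv
      exact (mem_sdiff.1 hv).2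
    · exact hKclique.subset (Finset.coe_subset.2 Finset.sdiff_subset)
  have hsplit : (K \ C).card + (K ∩ C).card = K.card :=
    Finset.card_sdiff_add_card_inter K C
  have hB : s - c ≤ (K ∩ C).card := by omega
  have hempty : K \ C = ∅ := by
    by_contra hne
    obtain ⟨v, hv⟩ := Finset.nonempty_of_ne_empty hne
    have hvK : v ∈ K := (mem_sdiff.1 hv).1
    have hvC : v ∉ C := (mem_sdiff.1 hv).2
    have hsub : K ∩ C ⊆ C.filter fun u => G.Adj v u := by
      intro u hu
      have huK : u ∈ K := (mem_inter.1 hu).1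
      have huC : u ∈ C := (mem_inter.1 hu).2
      refine mem_filter.2 ⟨huC, hKclique hvK huK ?_⟩
      rintro rfl; exact hvC huC
    have := le_trans (Finset.card_le_card hsub) (h2 v hvC)
    omega
  have hsub : K ⊆ C := by
    intro v hv
    by_contra hvC
    exact absurd (mem_sdiff.2 ⟨hv, hvC⟩) (by simp [hempty])
  exact Finset.eq_of_subset_of_card_le hsub (by omega)
end

section
/- Let G be a finite simple graph and S ⊆ V(G) a set of N vertices such that G − S is a disjoint union of K induced paths with no edges between distinct paths. Then the pathwidth of G is at most K + N. -/
/-- A path decomposition of a simple graph `G`: a sequence of bags covering all vertices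
and edges, such that the bags containing any fixed vertex form a contiguous interval. -/
structure PathDecomp {V : Type*} (G : SimpleGraph V) where
  m : ℕ
  bag : Fin m → Set V
  cover_vertex : ∀ v, ∃ i, v ∈ bag i
  cover_edge : ∀ ⦃u v⦄, G.Adj u v → ∃ i, u ∈ bag i ∧ v ∈ bag i
  interval : ∀ v (i j k : Fin m), i ≤ j → j ≤ k → v ∈ bag i → v ∈ bag k → v ∈ bag j

/-- `G` has pathwidth at most `w`: it admits a path decomposition all of whose bags have
size at most `w + 1`. -/
def PathwidthLE {V : Type*} (G : SimpleGraph V) (w : ℕ) : Prop :=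
  ∃ D : PathDecomp G, ∀ i, (D.bag i).ncard ≤ w + 1

/-- If `G` has a set `S` of `N` vertices such that `G − S` is the disjoint union of `K`
induced paths with no edges between distinct paths, then the pathwidth of `G` is at most
`K + N`. -/
theorem pathwidth_le_of_paths_plus_vertices {V : Type*} [Fintype V]
    (G : SimpleGraph V) (S : Set V) (N K : ℕ) (hS : S.ncard = N)
    (P : Fin K → Set V)
    (hsub : ∀ k, P k ⊆ Sᶜ)
    (hpart : ∀ v ∉ S, ∃! k, v ∈ P k)
    (hpaths : ∀ k, ∃ n, Nonempty (G.induce (P k) ≃g SimpleGraph.pathGraph n))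
    (hnoedge : ∀ k l, k ≠ l → ∀ u ∈ P k, ∀ v ∈ P l, ¬ G.Adj u v) :
    PathwidthLE G (K + N) := by
  classical
  choose n hn using hpaths
  let e : ∀ k, G.induce (P k) ≃g SimpleGraph.pathGraph (n k) := fun k => (hn k).some
  choose kv hmem using fun v (hv : v ∉ S) => (hpart v hv).exists
  have hkuniq : ∀ v (hv : v ∉ S) k, v ∈ P k → kv v hv = k := fun v hv k h =>
    (hpart v hv).unique (hmem v hv) h
  let n' : ℕ → ℕ := fun i => if h : i < K then n ⟨i, h⟩ else 0
  let off : ℕ → ℕ := fun k => ∑ i ∈ Finset.range k, n' i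
  let pos' : ∀ (k : Fin K) (v : V), v ∈ P k → ℕ := fun k v h => ((e k) ⟨v, h⟩).val
  let g : ∀ (v : V), v ∉ S → ℕ := fun v hv =>
    off (kv v hv).val + pos' (kv v hv) v (hmem v hv)
  set total := off K with htotal
  have hoffmono : ∀ a b, a ≤ b → off a ≤ off b := by
    intro a b hab
    exact Finset.sum_le_sum_of_subset (Finset.range_subset_range.2 hab)
  have hoffstep : ∀ k : Fin K, off k.val + n k = off (k.val + 1) := by
    intro k
    have : n' k.val = n k := by simp [n']
    simp [off, Finset.sum_range_succ, this]
  have hposlt : ∀ (k : Fin K) v (h : v ∈ P k), pos' k v h < n k := fun k v h =>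
    ((e k) ⟨v, h⟩).isLt
  have hgk : ∀ v (hv : v ∉ S) k (h : v ∈ P k),
      g v hv = off k.val + pos' k v h := by
    intro v hv k h
    have hk := hkuniq v hv k h
    subst hk
    rfl
  have hbound : ∀ (k : Fin K) v (h : v ∈ P k),
      off k.val + pos' k v h < total := by
    intro k v h
    have h1 := hposlt k v h
    have h2 := hoffstep k
    have h3 := hoffmono (k.val + 1) K k.isLt
    omega
  have hglt : ∀ v (hv : v ∉ S), g v hv < total := fun v hv =>
    hbound (kv v hv) v (hmem v hv)
  have hdecode : ∀ (k k' : Fin K) (i i' : ℕ), i < n k → i' < n k' →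
      off k.val + i = off k'.val + i' → k = k' := by
    intro k k' i i' hi hi' heq
    rcases lt_trichotomy k.val k'.val with h | h | h
    · have h1 := hoffstep k
      have h2 := hoffmono (k.val + 1) k'.val h
      omega
    · exact Fin.ext h
    · have h1 := hoffstep k'
      have h2 := hoffmono (k'.val + 1) k.val h
      omega
  have hcore : ∀ (k k' : Fin K) u v (h : u ∈ P k) (h' : v ∈ P k'),
      off k.val + pos' k u h = off k'.val + pos' k' v h' → u = v := by
    intro k k' u v h h' heq
    have hk := hdecode k k' _ _ (hposlt k u h) (hposlt k' v h') heq
    subst hk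
    have hpos : pos' k u h = pos' k v h' := by omega
    have : (e k) ⟨u, h⟩ = (e k) ⟨v, h'⟩ := Fin.ext hpos
    have := (e k).toEquiv.injective this
    exact congrArg Subtype.val this
  have ginj : ∀ u (hu : u ∉ S) v (hv : v ∉ S), g u hu = g v hv → u = v := by
    intro u hu v hv hg
    exact hcore _ _ u v (hmem u hu) (hmem v hv) hg
  by_cases htot : total = 0
  · -- degenerate: every vertex is in S
    have hall : ∀ v, v ∈ S := by
      intro v
      by_contra hv
      exact absurd (hglt v hv) (by omega)
    refine ⟨⟨1, fun _ => S, fun v => ⟨0, hall v⟩, fun u v _ => ⟨0, hall u, hall v⟩,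
      fun v i j k _ _ _ _ => hall v⟩, ?_⟩
    intro i
    simp only [hS]
    omega
  · have htotpos : 0 < total := Nat.pos_of_ne_zero htot
    have hKpos : 0 < K := by
      by_contra hK
      have : K = 0 := by omega
      subst this
      simp [htotal, off] at htotpos
    refine ⟨⟨total,
      fun i => S ∪ {v | ∃ h : v ∉ S, g v h = i.val ∨ g v h = i.val + 1},
      ?_, ?_, ?_⟩, ?_⟩
    · -- cover_vertex
      intro v
      by_cases hv : v ∈ S
      · exact ⟨⟨0, htotpos⟩, Or.inl hv⟩
      · exact ⟨⟨g v hv, hglt v hv⟩, Or.inr ⟨hv, Or.inl rfl⟩⟩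
    · -- cover_edge
      intro u v hadj
      by_cases hu : u ∈ S
      · by_cases hv : v ∈ S
        · exact ⟨⟨0, htotpos⟩, Or.inl hu, Or.inl hv⟩
        · exact ⟨⟨g v hv, hglt v hv⟩, Or.inl hu, Or.inr ⟨hv, Or.inl rfl⟩⟩
      · by_cases hv : v ∈ S
        · exact ⟨⟨g u hu, hglt u hu⟩, Or.inr ⟨hu, Or.inl rfl⟩, Or.inl hv⟩
        · -- both outside S : same path, consecutive
          have hk : kv u hu = kv v hv := by
            by_contra hne
            exact hnoedge _ _ hne u (hmem u hu) v (hmem v hv) hadj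
          set k := kv u hu with hkdef
          have hv' : v ∈ P k := by rw [hk]; exact hmem v hv
          have hadj' : (G.induce (P k)).Adj ⟨u, hmem u hu⟩ ⟨v, hv'⟩ := by
            simpa [SimpleGraph.comap_adj] using hadj
          have hpadj := (e k).map_adj_iff.mpr hadj'
          rw [SimpleGraph.pathGraph_adj] at hpadj
          have hgu : g u hu = off k.val + pos' k u (hmem u hu) := rfl
          have hgv : g v hv = off k.val + pos' k v hv' := hgk v hv k hv'
          rcases hpadj with hp | hp
          · -- pos u + 1 = pos v
            have hcons : g u hu + 1 = g v hv := by
              simp only [hgu, hgv, pos'] at *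
              omega
            exact ⟨⟨g u hu, hglt u hu⟩,
              Or.inr ⟨hu, Or.inl rfl⟩, Or.inr ⟨hv, Or.inr hcons.symm⟩⟩
          · have hcons : g v hv + 1 = g u hu := by
              simp only [hgu, hgv, pos'] at *
              omega
            exact ⟨⟨g v hv, hglt v hv⟩,
              Or.inr ⟨hu, Or.inr hcons.symm⟩, Or.inr ⟨hv, Or.inl rfl⟩⟩
    · -- interval
      intro v i j k hij hjk hi hk
      rcases hi with hv | ⟨hv, hgi⟩
      · exact Or.inl hv
      rcases hk with hvS | ⟨hv2, hgkk⟩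
      · exact Or.inl hvS
      refine Or.inr ⟨hv, ?_⟩
      have h1 : i.val ≤ j.val := hij
      have h2 : j.val ≤ k.val := hjk
      have : g v hv2 = g v hv := rfl
      omega
    · -- bag sizes
      intro i
      have hsub1 : {v | ∃ h : v ∉ S, g v h = i.val ∨ g v h = i.val + 1} ⊆
          {v | ∃ h : v ∉ S, g v h = i.val} ∪ {v | ∃ h : v ∉ S, g v h = i.val + 1} := by
        intro v ⟨h, hor⟩
        rcases hor with h1 | h1
        · exact Or.inl ⟨h, h1⟩
        · exact Or.inr ⟨h, h1⟩
      have hone : ∀ (m : ℕ), ({v | ∃ h : v ∉ S, g v h = m} : Set V).ncard ≤ 1 := by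
        intro m
        rw [Set.ncard_le_one (Set.toFinite _)]
        rintro a ⟨ha, hga⟩ b ⟨hb, hgb⟩
        exact ginj a ha b hb (hga.trans hgb.symm)
      calc (S ∪ {v | ∃ h : v ∉ S, g v h = i.val ∨ g v h = i.val + 1}).ncard
          ≤ S.ncard + {v | ∃ h : v ∉ S, g v h = i.val ∨ g v h = i.val + 1}.ncard :=
            Set.ncard_union_le _ _
        _ ≤ S.ncard + ({v | ∃ h : v ∉ S, g v h = i.val} ∪
              {v | ∃ h : v ∉ S, g v h = i.val + 1}).ncard := by
            exact Nat.add_le_add_left (Set.ncard_le_ncard hsub1 (Set.toFinite _)) _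
        _ ≤ S.ncard + ({v | ∃ h : v ∉ S, g v h = i.val}.ncard +
              {v | ∃ h : v ∉ S, g v h = i.val + 1}.ncard) := by
            gcongr
            exact Set.ncard_union_le _ _
        _ ≤ N + (1 + 1) := by
            rw [hS]
            gcongr <;> exact hone _
        _ ≤ K + N + 1 := by omega
end

section
/- Let G be a graph whose vertex set is partitioned into two induced cycles O_x and O_y such that every nonadjacent cross pair x ∈ O_x, y ∈ O_y has the property that x is adjacent to both neighbors of y on O_y and y is adjacent to both neighbors of x on O_x. Suppose R = v₁…v_r is an induced path of G meeting both O_x and O_y, and suppose some two consecutive vertices of R lie in the same cycle (both in O_x or both in O_y). Then r ≤ 6. -/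
/-- `p : Fin r → V` is an induced path in `G`: distinct vertices, with adjacency holding
exactly between consecutive vertices. -/
def IsInducedPath {V : Type*} (G : SimpleGraph V) {r : ℕ} (p : Fin r → V) : Prop :=
  Function.Injective p ∧
    ∀ a b : Fin r, G.Adj (p a) (p b) ↔ ((a : ℕ) + 1 = b ∨ (b : ℕ) + 1 = a)

/-- Pure combinatorial core: if `S` is nonempty on `[0,r)`, every two consecutive
non-`S` positions confine `S` to `{b-1, b+2}`, and there is a consecutive non-`S`
pair, then `r ≤ 6`. -/
lemma comb_core (r : ℕ) (S : ℕ → Prop)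
    (hY : ∃ c, c < r ∧ S c)
    (hpair : ∀ b, b + 1 < r → ¬ S b → ¬ S (b + 1) →
      ∀ c, c < r → S c → c + 1 = b ∨ c = b + 2)
    (a : ℕ) (ha : a + 1 < r) (ha0 : ¬ S a) (ha1 : ¬ S (a + 1)) : r ≤ 6 := by
  by_contra hr
  push_neg at hr
  have key := hpair a ha ha0 ha1
  have hnot : ∀ c, c < r → c + 1 ≠ a → c ≠ a + 2 → ¬ S c := by
    intro c hc h1 h2 hS
    rcases key c hc hS with h | h <;> omega
  have ha3 : a ≤ 3 := by
    by_contra h4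
    push_neg at h4
    obtain ⟨c, hc, hSc⟩ := hY
    have h0 : ¬ S 0 := hnot 0 (by omega) (by omega) (by omega)
    have h1 : ¬ S 1 := hnot 1 (by omega) (by omega) (by omega)
    have h2 : ¬ S 2 := hnot 2 (by omega) (by omega) (by omega)
    have k1 := hpair 0 (by omega) h0 h1 c hc hSc
    have k2 := hpair 1 (by omega) h1 h2 c hc hSc
    omega
  have hra : r ≤ a + 5 := by
    by_contra h5
    push_neg at h5
    obtain ⟨c, hc, hSc⟩ := hY
    have h4 : ¬ S (a + 4) := hnot _ (by omega) (by omega) (by omega)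
    have h5' : ¬ S (a + 5) := hnot _ (by omega) (by omega) (by omega)
    have k := hpair (a + 4) (by omega) h4 h5' c hc hSc
    have k0 := key c hc hSc
    omega
  obtain ⟨c, hc, hSc⟩ := hY
  have kc := key c hc hSc
  have ha2 : 2 ≤ a := by omega
  interval_cases a
  · -- a = 2, r = 7
    have hr7 : r = 7 := by omega
    have h5 : ¬ S 5 := hnot 5 (by omega) (by omega) (by omega)
    have h6 : ¬ S 6 := hnot 6 (by omega) (by omega) (by omega)
    have k56 := hpair 5 (by omega) h5 h6 c hc hSc
    have h1 : ¬ S 1 := by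
      intro hS1
      have := hpair 5 (by omega) h5 h6 1 (by omega) hS1
      omega
    have h0 : ¬ S 0 := hnot 0 (by omega) (by omega) (by omega)
    have k01 := hpair 0 (by omega) h0 h1 c hc hSc
    omega
  · -- a = 3, r ∈ {7,8}
    have h0 : ¬ S 0 := hnot 0 (by omega) (by omega) (by omega)
    have h1 : ¬ S 1 := hnot 1 (by omega) (by omega) (by omega)
    have k01 := hpair 0 (by omega) h0 h1 c hc hSc
    have h5 : ¬ S 5 := by
      intro hS5
      have := hpair 0 (by omega) h0 h1 5 (by omega) hS5
      omega
    have h6 : ¬ S 6 := hnot 6 (by omega) (by omega) (by omega)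
    have k56 := hpair 5 (by omega) h5 h6 c hc hSc
    omega

/-- Graph core: if `p b` and `p (b+1)` both lie on the cycle `x`, then any position `c`
of the path lying on the cycle `y` satisfies `c + 1 = b` or `c = b + 2`. -/
lemma pair_lemma {V : Type*} (G : SimpleGraph V) {α β : ℕ}
    (x : ZMod α → V) (y : ZMod β → V)
    (hne : ∀ i j, x i ≠ y j)
    (hxcyc : ∀ i i', G.Adj (x i) (x i') ↔ (i' = i + 1 ∨ i = i' + 1))
    (hcross : ∀ i j, ¬ G.Adj (x i) (y j) →
      G.Adj (y j) (x (i - 1)) ∧ G.Adj (y j) (x (i + 1)))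
    {r : ℕ} (p : Fin r → V) (hp : IsInducedPath G p)
    (b : ℕ) (hb : b + 1 < r) (i i' : ZMod α)
    (hpb : p ⟨b, by omega⟩ = x i) (hpb1 : p ⟨b + 1, hb⟩ = x i')
    (c : ℕ) (hc : c < r) (j : ZMod β) (hpc : p ⟨c, hc⟩ = y j) :
    c + 1 = b ∨ c = b + 2 := by
  have hadj : G.Adj (x i) (x i') := by
    rw [← hpb, ← hpb1]
    exact (hp.2 ⟨b, by omega⟩ ⟨b + 1, hb⟩).mpr (Or.inl rfl)
  have hii' := (hxcyc i i').mp hadj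
  have hyadj : G.Adj (y j) (x i) ∨ G.Adj (y j) (x i') := by
    by_cases hA : G.Adj (x i) (y j)
    · exact Or.inl hA.symm
    · obtain ⟨h1, h2⟩ := hcross i j hA
      rcases hii' with h | h
      · exact Or.inr (h ▸ h2)
      · have hii : i' = i - 1 := by rw [h]; ring
        exact Or.inr (hii ▸ h1)
  rcases hyadj with hA | hA
  · have hd := (hp.2 ⟨c, hc⟩ ⟨b, by omega⟩).mp (by rw [hpc, hpb]; exact hA)
    rcases hd with h' | h'
    · exact Or.inl h'
    · exfalso
      have hcb : c = b + 1 := by simpa using h'.symm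
      have : p ⟨c, hc⟩ = p ⟨b + 1, hb⟩ := by congr 1; exact Fin.ext hcb
      rw [hpc, hpb1] at this
      exact hne i' j this.symm
  · have hd := (hp.2 ⟨c, hc⟩ ⟨b + 1, hb⟩).mp (by rw [hpc, hpb1]; exact hA)
    rcases hd with h' | h'
    · exfalso
      have hcb : c = b := by simpa using h'
      have : p ⟨c, hc⟩ = p ⟨b, by omega⟩ := by congr 1; exact Fin.ext hcb
      rw [hpc, hpb] at this
      exact hne i j this.symm
    · right
      simpa using h'.symm

/-- Let `G` be partitioned into two induced cycles `O_x = {x i}` and `O_y = {y j}` such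
that whenever `x i` and `y j` are nonadjacent, `x i` is adjacent to both cycle-neighbors
of `y j` and `y j` is adjacent to both cycle-neighbors of `x i`.  If `R = p 0 ⋯ p (r-1)`
is an induced path of `G` meeting both cycles in which some two consecutive vertices lie
in the same cycle, then `r ≤ 6`. -/
theorem induced_path_consecutive_same_cycle_short {V : Type*} [Fintype V]
    (G : SimpleGraph V) (α β : ℕ) (hα : 3 ≤ α) (hβ : 3 ≤ β)
    (x : ZMod α → V) (y : ZMod β → V)
    (hxinj : Function.Injective x) (hyinj : Function.Injective y)
    (hpart : ∀ v : V, (∃ i, x i = v) ↔ ¬ ∃ j, y j = v)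
    (hxcyc : ∀ i i', G.Adj (x i) (x i') ↔ (i' = i + 1 ∨ i = i' + 1))
    (hycyc : ∀ j j', G.Adj (y j) (y j') ↔ (j' = j + 1 ∨ j = j' + 1))
    (hcross : ∀ i j, ¬ G.Adj (x i) (y j) →
      G.Adj (x i) (y (j - 1)) ∧ G.Adj (x i) (y (j + 1)) ∧
        G.Adj (y j) (x (i - 1)) ∧ G.Adj (y j) (x (i + 1)))
    (r : ℕ) (p : Fin r → V) (hp : IsInducedPath G p)
    (hmeetx : ∃ a i, p a = x i) (hmeety : ∃ b j, p b = y j)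
    (hconsec : ∃ (a : Fin r) (h : (a : ℕ) + 1 < r),
      (∃ i i', p a = x i ∧ p ⟨(a : ℕ) + 1, h⟩ = x i') ∨
      (∃ j j', p a = y j ∧ p ⟨(a : ℕ) + 1, h⟩ = y j')) :
    r ≤ 6 := by
  have hne : ∀ i j, x i ≠ y j := fun i j hEq =>
    ((hpart (x i)).mp ⟨i, rfl⟩) ⟨j, hEq.symm⟩
  obtain ⟨a, h, hcase⟩ := hconsec
  rcases hcase with ⟨i, i', hpa, hpa1⟩ | ⟨j, j', hpa, hpa1⟩
  · -- consecutive pair in O_x: S c says position c lies in O_y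
    apply comb_core r (fun c => ∃ (hc : c < r) (j : ZMod β), p ⟨c, hc⟩ = y j)
    · obtain ⟨b, j0, hbj⟩ := hmeety
      exact ⟨b, b.isLt, b.isLt, j0, by rw [Fin.eta]; exact hbj⟩
    · intro b hb hSb hSb1 c hc hSc
      obtain ⟨hcc, j0, hpcj⟩ := hSc
      obtain ⟨i0, hi0⟩ := (hpart (p ⟨b, by omega⟩)).mpr
        (fun ⟨j1, hj1⟩ => hSb ⟨by omega, j1, hj1.symm⟩)
      obtain ⟨i1, hi1⟩ := (hpart (p ⟨b + 1, hb⟩)).mpr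
        (fun ⟨j1, hj1⟩ => hSb1 ⟨hb, j1, hj1.symm⟩)
      have := pair_lemma G x y hne hxcyc
        (fun i2 j2 hA => ⟨(hcross i2 j2 hA).2.2.1, (hcross i2 j2 hA).2.2.2⟩)
        p hp b hb i0 i1 hi0.symm hi1.symm c hcc j0 hpcj
      exact this
    · exact h
    · rintro ⟨hc, j0, hpj⟩
      have : p ⟨(a : ℕ), hc⟩ = p a := by rw [Fin.eta]
      rw [this, hpa] at hpj
      exact hne i j0 hpj
    · rintro ⟨hc, j0, hpj⟩
      have : p ⟨(a : ℕ) + 1, hc⟩ = p ⟨(a : ℕ) + 1, h⟩ := rfl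
      rw [this, hpa1] at hpj
      exact hne i' j0 hpj
  · -- consecutive pair in O_y: S c says position c lies in O_x
    apply comb_core r (fun c => ∃ (hc : c < r) (i : ZMod α), p ⟨c, hc⟩ = x i)
    · obtain ⟨b, i0, hbi⟩ := hmeetx
      exact ⟨b, b.isLt, b.isLt, i0, by rw [Fin.eta]; exact hbi⟩
    · intro b hb hSb hSb1 c hc hSc
      obtain ⟨hcc, i0, hpci⟩ := hSc
      have hyb : ∃ j0, p ⟨b, by omega⟩ = y j0 := by
        by_contra hno
        push_neg at hno
        obtain ⟨i1, hi1⟩ := (hpart (p ⟨b, by omega⟩)).mpr (fun ⟨j1, hj1⟩ => hno j1 hj1.symm)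
        exact hSb ⟨by omega, i1, hi1.symm⟩
      have hyb1 : ∃ j0, p ⟨b + 1, hb⟩ = y j0 := by
        by_contra hno
        push_neg at hno
        obtain ⟨i1, hi1⟩ := (hpart (p ⟨b + 1, hb⟩)).mpr (fun ⟨j1, hj1⟩ => hno j1 hj1.symm)
        exact hSb1 ⟨hb, i1, hi1.symm⟩
      obtain ⟨j0, hj0⟩ := hyb
      obtain ⟨j1, hj1⟩ := hyb1
      have := pair_lemma G y x (fun j2 i2 hEq => hne i2 j2 hEq.symm) hycyc
        (fun j2 i2 hA =>
          ⟨(hcross i2 j2 (fun hAd => hA hAd.symm)).1,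
           (hcross i2 j2 (fun hAd => hA hAd.symm)).2.1⟩)
        p hp b hb j0 j1 hj0 hj1 c hcc i0 hpci
      exact this
    · exact h
    · rintro ⟨hc, i0, hpi⟩
      have : p ⟨(a : ℕ), hc⟩ = p a := by rw [Fin.eta]
      rw [this, hpa] at hpi
      exact hne i0 j hpi.symm
    · rintro ⟨hc, i0, hpi⟩
      have : p ⟨(a : ℕ) + 1, hc⟩ = p ⟨(a : ℕ) + 1, h⟩ := rfl
      rw [this, hpa1] at hpi
      exact hne i0 j' hpi.symm
end

section
/- Let G be as follows: vertices a, b, c, d with edges ab, bc, cd, da; an induced path a = p₀ p₁ ⋯ p_m = c with m ≥ 2 whose internal vertices are new; b and d are nonadjacent and each adjacent to at least one internal path vertex; no other edges. If G contains no induced theta and no induced wheel, then one of b, d is adjacent exactly to the internal vertex p₁ and the other is adjacent exactly to the internal vertex p_{m−1} (so G is a prism). -/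
/-- `p : Fin (n+1) → V` is an induced path in `G` (with `n` edges): distinct vertices,
adjacency holding exactly between consecutive vertices. -/
def IsInducedPathOn {V : Type*} (G : SimpleGraph V) {n : ℕ} (p : Fin (n + 1) → V) : Prop :=
  Function.Injective p ∧
    ∀ i j : Fin (n + 1), G.Adj (p i) (p j) ↔ ((i : ℕ) + 1 = j ∨ (j : ℕ) + 1 = i)

/-- `i` is an internal index of a path with `n` edges. -/
def Internal {n : ℕ} (i : Fin (n + 1)) : Prop := (i : ℕ) ≠ 0 ∧ (i : ℕ) ≠ n

/-- `G` contains an induced theta: two nonadjacent vertices `a`, `b` joined by three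
internally disjoint induced paths of length at least 2, with no edges between the
interiors of distinct paths. -/
def HasInducedTheta {V : Type*} (G : SimpleGraph V) : Prop :=
  ∃ (a b : V) (n : Fin 3 → ℕ) (p : ∀ k, Fin (n k + 1) → V),
    (∀ k, 2 ≤ n k) ∧ (∀ k, IsInducedPathOn G (p k)) ∧
    (∀ k, p k 0 = a ∧ p k (Fin.last (n k)) = b) ∧
    (∀ k l, k ≠ l → ∀ i j, Internal i → Internal j →
      p k i ≠ p l j ∧ ¬ G.Adj (p k i) (p l j))

/-- `G` contains an induced prism: two vertex-disjoint triangles (the triples of initial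
and of final endpoints) joined by three vertex-disjoint induced paths of length at least 1,
with no edges between distinct paths other than the triangle edges. -/
def HasInducedPrism {V : Type*} (G : SimpleGraph V) : Prop :=
  ∃ (n : Fin 3 → ℕ) (p : ∀ k, Fin (n k + 1) → V),
    (∀ k, 1 ≤ n k) ∧ (∀ k, IsInducedPathOn G (p k)) ∧
    (∀ k l, k ≠ l → ∀ i j, p k i ≠ p l j ∧
      (G.Adj (p k i) (p l j) ↔
        (((i : ℕ) = 0 ∧ (j : ℕ) = 0) ∨ ((i : ℕ) = n k ∧ (j : ℕ) = n l))))

/-- `G` contains an induced wheel: an induced cycle of length at least 4 together with a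
further vertex having at least 3 neighbors on the cycle. -/
def HasInducedWheel {V : Type*} (G : SimpleGraph V) : Prop :=
  ∃ (m : ℕ) (c : Fin (m + 4) → V) (v : V),
    Function.Injective c ∧
    (∀ i j, G.Adj (c i) (c j) ↔ (j = i + 1 ∨ i = j + 1)) ∧
    (∀ i, v ≠ c i) ∧ 3 ≤ {i | G.Adj v (c i)}.ncard


namespace ThetaAux

variable {V : Type*} {G : SimpleGraph V}

def pick3 {α : Fin 3 → Sort*} (a : α 0) (b : α 1) (c : α 2) : ∀ k, α k
  | ⟨0, _⟩ => a
  | ⟨1, _⟩ => b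
  | ⟨2, _⟩ => c

lemma pick3_cases {α : Fin 3 → Sort*} {C : ∀ k, α k → Prop} {a : α 0} {b : α 1} {c : α 2}
    (h0 : C 0 a) (h1 : C 1 b) (h2 : C 2 c) : ∀ k, C k (pick3 a b c k)
  | ⟨0, _⟩ => h0
  | ⟨1, _⟩ => h1
  | ⟨2, _⟩ => h2

lemma wheel_gadget (n : ℕ) (hn : 4 ≤ n) (c : Fin n → V) (v : V)
    (hinj : ∀ i j : Fin n, c i = c j → i = j)
    (hadj : ∀ i j : Fin n, G.Adj (c i) (c j) ↔
      ((i:ℕ)+1 = (j:ℕ) ∨ (j:ℕ)+1 = (i:ℕ) ∨ ((i:ℕ) = 0 ∧ (j:ℕ)+1 = n) ∨ ((j:ℕ) = 0 ∧ (i:ℕ)+1 = n)))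
    (hv : ∀ i, v ≠ c i)
    (i1 i2 i3 : Fin n) (h12 : i1 ≠ i2) (h13 : i1 ≠ i3) (h23 : i2 ≠ i3)
    (a1 : G.Adj v (c i1)) (a2 : G.Adj v (c i2)) (a3 : G.Adj v (c i3)) :
    HasInducedWheel G := by
  obtain ⟨M, rfl⟩ : ∃ M, n = M + 4 := ⟨n - 4, by omega⟩
  refine ⟨M, c, v, fun i j h => hinj i j h, ?_, hv, ?_⟩
  · intro i j
    rw [hadj]
    have hi := i.isLt; have hj := j.isLt
    have key : ∀ a b : Fin (M+4), (a = b + 1) ↔ ((b:ℕ)+1 = (a:ℕ) ∨ ((b:ℕ)+1 = M+4 ∧ (a:ℕ) = 0)) := by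
      intro a b
      rw [Fin.ext_iff, Fin.add_def]
      have h1 : ((1:Fin (M+4)):ℕ) = 1 := rfl
      rw [h1]
      have hb := b.isLt
      have hmod : ((b:ℕ) + 1) % (M+4) = if (b:ℕ) + 1 = M + 4 then 0 else (b:ℕ)+1 := by
        split
        · next h => rw [h, Nat.mod_self]
        · exact Nat.mod_eq_of_lt (by omega)
      show (a:ℕ) = ((b:ℕ) + 1) % (M+4) ↔ _
      rw [hmod]
      split <;> omega
    rw [key j i, key i j]
    omega
  · have h3 : ({i1,i2,i3} : Set (Fin (M+4))).ncard = 3 :=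
      Set.ncard_eq_three.mpr ⟨i1,i2,i3,h12,h13,h23,rfl⟩
    have hsub : ({i1, i2, i3} : Set (Fin (M+4))) ⊆ {i | G.Adj v (c i)} := by
      intro t ht
      rcases ht with rfl | rfl | rfl
      · exact a1
      · exact a2
      · exact a3
    calc (3:ℕ) = _ := h3.symm
      _ ≤ _ := Set.ncard_le_ncard hsub (Set.toFinite _)

lemma inducedPath1 (u w : V) (huw : G.Adj u w) :
    IsInducedPathOn G (fun i : Fin 2 => if (i:ℕ) = 0 then u else w) := by
  have hne : u ≠ w := G.ne_of_adj huw
  constructor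
  · intro i j hij
    rcases i with ⟨iv, hiv⟩; rcases j with ⟨jv, hjv⟩
    interval_cases iv <;> interval_cases jv <;> simp_all
  · intro i j
    rcases i with ⟨iv, hiv⟩; rcases j with ⟨jv, hjv⟩
    interval_cases iv <;> interval_cases jv <;>
      simp_all [SimpleGraph.irrefl, G.adj_comm]

lemma inducedPath2 (u v w : V) (huv : G.Adj u v) (hvw : G.Adj v w)
    (huw : ¬ G.Adj u w) (hne : u ≠ w) :
    IsInducedPathOn G (fun i : Fin 3 => if (i:ℕ) = 0 then u else if (i:ℕ) = 1 then v else w) := by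
  have h1 : u ≠ v := G.ne_of_adj huv
  have h2 : v ≠ w := G.ne_of_adj hvw
  constructor
  · intro i j hij
    rcases i with ⟨iv, hiv⟩; rcases j with ⟨jv, hjv⟩
    interval_cases iv <;> interval_cases jv <;> simp_all
  · intro i j
    rcases i with ⟨iv, hiv⟩; rcases j with ⟨jv, hjv⟩
    interval_cases iv <;> interval_cases jv <;>
      simp_all [SimpleGraph.irrefl, G.adj_comm]

lemma inducedPathSeg (m : ℕ) (pp : ℕ → V)
    (ppinj : ∀ s t, s ≤ m → t ≤ m → pp s = pp t → s = t)
    (ppadj : ∀ s t, s ≤ m → t ≤ m → (G.Adj (pp s) (pp t) ↔ (s + 1 = t ∨ t + 1 = s)))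
    (a e : ℕ) (hae : a + e ≤ m) :
    IsInducedPathOn G (fun i : Fin (e + 1) => pp (a + (i:ℕ))) := by
  constructor
  · intro i j hij
    have hi := i.isLt; have hj := j.isLt
    have := ppinj (a + i) (a + j) (by omega) (by omega) hij
    exact Fin.ext (by omega)
  · intro i j
    have hi := i.isLt; have hj := j.isLt
    rw [ppadj _ _ (by omega) (by omega)]
    omega

def path2 (u v w : V) : Fin 3 → V :=
  fun i => if (i:ℕ) = 0 then u else if (i:ℕ) = 1 then v else w

def segPath (pp : ℕ → V) (x y : V) (k L : ℕ) : Fin (L+1) → V :=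
  fun i => if (i:ℕ) = 0 then x else if (i:ℕ) = L then y else pp (k + (i:ℕ) - 1)

lemma path2_0 (u v w : V) (i : Fin 3) (h : (i:ℕ) = 0) : path2 u v w i = u := by
  simp [path2, h]
lemma path2_1 (u v w : V) (i : Fin 3) (h : (i:ℕ) = 1) : path2 u v w i = v := by
  simp [path2, h]
lemma path2_2 (u v w : V) (i : Fin 3) (h : (i:ℕ) = 2) : path2 u v w i = w := by
  simp [path2, h]

lemma inducedPath2' (u v w : V) (huv : G.Adj u v) (hvw : G.Adj v w)
    (huw : ¬ G.Adj u w) (hne : u ≠ w) : IsInducedPathOn G (path2 u v w) := by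
  have h1 : u ≠ v := G.ne_of_adj huv
  have h2 : v ≠ w := G.ne_of_adj hvw
  constructor
  · intro i j hij
    rcases i with ⟨iv, hiv⟩; rcases j with ⟨jv, hjv⟩
    interval_cases iv <;> interval_cases jv <;> simp_all [path2]
  · intro i j
    rcases i with ⟨iv, hiv⟩; rcases j with ⟨jv, hjv⟩
    interval_cases iv <;> interval_cases jv <;>
      simp_all [path2, SimpleGraph.irrefl, G.adj_comm]

@[simp] lemma pick3_zero {α : Fin 3 → Sort*} (a : α 0) (b : α 1) (c : α 2) :
    pick3 a b c 0 = a := rfl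
@[simp] lemma pick3_one {α : Fin 3 → Sort*} (a : α 0) (b : α 1) (c : α 2) :
    pick3 a b c 1 = b := rfl
@[simp] lemma pick3_two {α : Fin 3 → Sort*} (a : α 0) (b : α 1) (c : α 2) :
    pick3 a b c 2 = c := rfl

@[simp] lemma pick3_mk0 {α : Fin 3 → Sort*} (a : α 0) (b : α 1) (c : α 2) (h : (0:ℕ) < 3) :
    pick3 a b c ⟨0, h⟩ = a := rfl
@[simp] lemma pick3_mk1 {α : Fin 3 → Sort*} (a : α 0) (b : α 1) (c : α 2) (h : (1:ℕ) < 3) :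
    pick3 a b c ⟨1, h⟩ = b := rfl
@[simp] lemma pick3_mk2 {α : Fin 3 → Sort*} (a : α 0) (b : α 1) (c : α 2) (h : (2:ℕ) < 3) :
    pick3 a b c ⟨2, h⟩ = c := rfl

lemma cfg_theta (m : ℕ) (pp : ℕ → V)
    (ppinj : ∀ s t, s ≤ m → t ≤ m → pp s = pp t → s = t)
    (ppadj : ∀ s t, s ≤ m → t ≤ m → (G.Adj (pp s) (pp t) ↔ (s + 1 = t ∨ t + 1 = s)))
    (x y : V) (hxy : x ≠ y) (hnxy : ¬ G.Adj x y)
    (hx0 : G.Adj x (pp 0)) (hxm : G.Adj x (pp m))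
    (hy0 : G.Adj y (pp 0)) (hym : G.Adj y (pp m))
    (hxp : ∀ t, t ≤ m → x ≠ pp t) (hyp' : ∀ t, t ≤ m → y ≠ pp t)
    (k l : ℕ) (hk : 2 ≤ k) (hkl : k ≤ l) (hl : l + 2 ≤ m)
    (hxk : G.Adj x (pp k)) (hyl : G.Adj y (pp l))
    (hxmid : ∀ t, k < t → t ≤ l → ¬ G.Adj x (pp t))
    (hymid : ∀ t, k ≤ t → t < l → ¬ G.Adj y (pp t)) :
    HasInducedTheta G := by
  have hm4 : 4 ≤ m := by omega
  set L := l - k + 2 with hLdef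
  have hL2 : 2 ≤ L := by omega
  set q2 : Fin (L + 1) → V := segPath pp x y k L with hq2
  have q2e : ∀ i : Fin (L+1), ((i:ℕ) = 0 ∧ q2 i = x) ∨ ((i:ℕ) = L ∧ q2 i = y) ∨
      (1 ≤ (i:ℕ) ∧ (i:ℕ) + 1 ≤ L ∧ q2 i = pp (k + (i:ℕ) - 1)) := by
    intro i
    have hi := i.isLt
    by_cases h0 : (i:ℕ) = 0
    · exact Or.inl ⟨h0, by simp [hq2, segPath, h0]⟩
    by_cases hL : (i:ℕ) = L
    · exact Or.inr (Or.inl ⟨hL, by simp [hq2, segPath, hL]⟩)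
    · exact Or.inr (Or.inr ⟨by omega, by omega, by simp [hq2, segPath, h0, hL]⟩)
  have hidx : ∀ i : Fin (L+1), 1 ≤ (i:ℕ) → (i:ℕ) + 1 ≤ L →
      (k ≤ k + (i:ℕ) - 1 ∧ k + (i:ℕ) - 1 ≤ l ∧ k + (i:ℕ) - 1 ≤ m) := by
    intro i h1 h2; omega
  have hpath2 : IsInducedPathOn G q2 := by
    constructor
    · intro i j hij
      apply Fin.ext
      rcases q2e i with ⟨hi1, hi2⟩ | ⟨hi1, hi2⟩ | ⟨hi1a, hi1b, hi2⟩ <;>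
        rcases q2e j with ⟨hj1, hj2⟩ | ⟨hj1, hj2⟩ | ⟨hj1a, hj1b, hj2⟩ <;>
        rw [hi2, hj2] at hij
      · omega
      · exact absurd hij hxy
      · exact absurd hij (hxp _ (by omega))
      · exact absurd hij.symm hxy
      · omega
      · exact absurd hij (hyp' _ (by omega))
      · exact absurd hij.symm (hxp _ (by omega))
      · exact absurd hij.symm (hyp' _ (by omega))
      · have := ppinj _ _ (by omega) (by omega) hij; omega
    · have adj2 : ∀ i j : Fin (L+1), (i:ℕ) ≤ (j:ℕ) →
          (G.Adj (q2 i) (q2 j) ↔ ((i:ℕ)+1 = (j:ℕ) ∨ (j:ℕ)+1 = (i:ℕ))) := by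
        intro i j hle
        rcases q2e i with ⟨hi1, hi2⟩ | ⟨hi1, hi2⟩ | ⟨hi1a, hi1b, hi2⟩ <;>
          rcases q2e j with ⟨hj1, hj2⟩ | ⟨hj1, hj2⟩ | ⟨hj1a, hj1b, hj2⟩ <;>
          rw [hi2, hj2]
        · constructor
          · intro h; exact absurd h (G.irrefl)
          · intro h; omega
        · constructor
          · intro h; exact absurd h hnxy
          · intro h; omega
        · -- x vs mid
          rcases eq_or_ne (j:ℕ) 1 with h1 | h1
          · have he : k + (j:ℕ) - 1 = k := by omega
            rw [he]
            exact ⟨fun _ => by omega, fun _ => hxk⟩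
          · have hmid := hxmid (k + (j:ℕ) - 1) (by omega) (by omega)
            exact ⟨fun h => absurd h hmid, fun hc => absurd hc (by omega)⟩
        · exact absurd hle (by omega)
        · constructor
          · intro h; exact absurd h (G.irrefl)
          · intro h; omega
        · exact absurd hle (by omega)
        · exact absurd hle (by omega)
        · -- mid vs y
          rcases eq_or_ne (i:ℕ) (L-1) with h1 | h1
          · have he : k + (i:ℕ) - 1 = l := by omega
            rw [he]
            exact ⟨fun _ => by omega, fun _ => hyl.symm⟩
          · have hmid := hymid (k + (i:ℕ) - 1) (by omega) (by omega)
            exact ⟨fun h => absurd h.symm hmid, fun hc => absurd hc (by omega)⟩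
        · rw [ppadj _ _ (by omega) (by omega)]
          omega
      intro i j
      rcases le_total ((i:ℕ)) ((j:ℕ)) with h | h
      · exact adj2 i j h
      · rw [G.adj_comm, adj2 j i h]; omega
  have hq2_0 : q2 0 = x := by simp [hq2, segPath]
  have hq2_last : q2 (Fin.last L) = y := by
    have hv : ((Fin.last L : Fin (L+1)) : ℕ) = L := rfl
    simp [hq2, segPath, hv, (by omega : ¬ L = 0)]
  set q0 : Fin 3 → V := path2 x (pp 0) y with hq0
  set q1 : Fin 3 → V := path2 x (pp m) y with hq1
  have hpath0 : IsInducedPathOn G q0 := inducedPath2' x (pp 0) y hx0 hy0.symm hnxy hxy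
  have hpath1 : IsInducedPathOn G q1 := inducedPath2' x (pp m) y hxm hym.symm hnxy hxy
  refine ⟨x, y, pick3 (α := fun _ => ℕ) 2 2 L,
    pick3 (α := fun kk => Fin ((pick3 (α := fun _ => ℕ) 2 2 L) kk + 1) → V) q0 q1 q2,
    ?_, ?_, ?_, ?_⟩
  · exact pick3_cases (C := fun kk nv => 2 ≤ nv) le_rfl le_rfl hL2
  · exact pick3_cases (α := fun kk => Fin ((pick3 (α := fun _ => ℕ) 2 2 L) kk + 1) → V)
      (C := fun kk q => IsInducedPathOn G q) hpath0 hpath1 hpath2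
  · refine pick3_cases (α := fun kk => Fin ((pick3 (α := fun _ => ℕ) 2 2 L) kk + 1) → V)
      (C := fun kk q => q 0 = x ∧ q (Fin.last ((pick3 (α := fun _ => ℕ) 2 2 L) kk)) = y) ?_ ?_ ?_
    · exact ⟨by simp [hq0, path2], by simp [hq0, path2, Fin.last, pick3_zero]⟩
    · exact ⟨by simp [hq1, path2], by simp [hq1, path2, Fin.last, pick3_one]⟩
    · exact ⟨hq2_0, hq2_last⟩
  · -- cross conditions
    have ppne : ∀ s t, s ≤ m → t ≤ m → s ≠ t → pp s ≠ pp t :=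
      fun s t hs ht hst h => hst (ppinj s t hs ht h)
    have ppnadj : ∀ s t, s ≤ m → t ≤ m → s + 1 ≠ t → t + 1 ≠ s → ¬ G.Adj (pp s) (pp t) := by
      intro s t hs ht h1 h2
      rw [ppadj s t hs ht]; omega
    have int0 : ∀ (i : Fin 3), Internal (n := 2) i → q0 i = pp 0 := by
      intro i h
      rw [hq0]; exact path2_1 _ _ _ i (by have := i.isLt; obtain ⟨h1, h2⟩ := h; omega)
    have int1 : ∀ (i : Fin 3), Internal (n := 2) i → q1 i = pp m := by
      intro i h
      rw [hq1]; exact path2_1 _ _ _ i (by have := i.isLt; obtain ⟨h1, h2⟩ := h; omega)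
    have int2 : ∀ (i : Fin (L+1)), Internal (n := L) i → ∃ t, k ≤ t ∧ t ≤ l ∧ q2 i = pp t := by
      intro i h
      obtain ⟨h1, h2⟩ := h
      rcases q2e i with ⟨hi1, _⟩ | ⟨hi1, _⟩ | ⟨hi1a, hi1b, hi2⟩
      · omega
      · omega
      · exact ⟨k + (i:ℕ) - 1, by omega, by omega, hi2⟩
    intro kk ll hne i j hi hj
    rcases kk with ⟨kv, hkv⟩; rcases ll with ⟨lv, hlv⟩
    interval_cases kv <;> interval_cases lv <;>
        dsimp only [pick3]
    · exact (hne rfl).elim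
    · rw [int0 i hi, int1 j hj]
      exact ⟨ppne 0 m (by omega) le_rfl (by omega), ppnadj 0 m (by omega) le_rfl (by omega) (by omega)⟩
    · obtain ⟨t, ht1, ht2, hte⟩ := int2 j hj
      rw [int0 i hi, hte]
      exact ⟨ppne 0 t (by omega) (by omega) (by omega), ppnadj 0 t (by omega) (by omega) (by omega) (by omega)⟩
    · rw [int1 i hi, int0 j hj]
      exact ⟨ppne m 0 le_rfl (by omega) (by omega), ppnadj m 0 le_rfl (by omega) (by omega) (by omega)⟩
    · exact (hne rfl).elim
    · obtain ⟨t, ht1, ht2, hte⟩ := int2 j hj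
      rw [int1 i hi, hte]
      exact ⟨ppne m t le_rfl (by omega) (by omega), ppnadj m t le_rfl (by omega) (by omega) (by omega)⟩
    · obtain ⟨t, ht1, ht2, hte⟩ := int2 i hi
      rw [int0 j hj, hte]
      exact ⟨ppne t 0 (by omega) (by omega) (by omega), ppnadj t 0 (by omega) (by omega) (by omega) (by omega)⟩
    · obtain ⟨t, ht1, ht2, hte⟩ := int2 i hi
      rw [int1 j hj, hte]
      exact ⟨ppne t m (by omega) le_rfl (by omega), ppnadj t m (by omega) le_rfl (by omega) (by omega)⟩
    · exact (hne rfl).elim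

lemma cfg_wheel4 (m : ℕ) (hm : 2 ≤ m) (pp : ℕ → V)
    (ppinj : ∀ s t, s ≤ m → t ≤ m → pp s = pp t → s = t)
    (ppadj : ∀ s t, s ≤ m → t ≤ m → (G.Adj (pp s) (pp t) ↔ (s + 1 = t ∨ t + 1 = s)))
    (x y : V) (hxy : x ≠ y) (hnxy : ¬ G.Adj x y)
    (hx0 : G.Adj x (pp 0)) (hxm : G.Adj x (pp m))
    (hy0 : G.Adj y (pp 0)) (hym : G.Adj y (pp m))
    (hxp : ∀ t, t ≤ m → x ≠ pp t) (hyp' : ∀ t, t ≤ m → y ≠ pp t)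
    (t : ℕ) (ht1 : 1 ≤ t) (ht2 : t + 1 ≤ m)
    (hxt : G.Adj x (pp t)) (hyt : G.Adj y (pp t))
    (hcase : t = 1 ∨ t + 1 = m) : HasInducedWheel G := by
  have hne1 : x ≠ pp 0 := hxp 0 (by omega)
  have hne2 : x ≠ pp m := hxp m le_rfl
  have hne3 : y ≠ pp 0 := hyp' 0 (by omega)
  have hne4 : y ≠ pp m := hyp' m le_rfl
  have hne5 : pp 0 ≠ pp m := fun h => by have := ppinj 0 m (by omega) le_rfl h; omega
  have hna : ¬ G.Adj (pp 0) (pp m) := by rw [ppadj 0 m (by omega) le_rfl]; omega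
  set c : Fin 4 → V := fun i =>
    if (i:ℕ) = 0 then x else if (i:ℕ) = 1 then pp 0 else if (i:ℕ) = 2 then y else pp m with hc
  have e0 : c ⟨0, by omega⟩ = x := rfl
  have e1 : c ⟨1, by omega⟩ = pp 0 := rfl
  have e2 : c ⟨2, by omega⟩ = y := rfl
  have e3 : c ⟨3, by omega⟩ = pp m := rfl
  have ce : ∀ i : Fin 4, ((i:ℕ) = 0 ∧ c i = x) ∨ ((i:ℕ) = 1 ∧ c i = pp 0) ∨
      ((i:ℕ) = 2 ∧ c i = y) ∨ ((i:ℕ) = 3 ∧ c i = pp m) := by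
    intro i
    have hi := i.isLt
    by_cases h0 : (i:ℕ) = 0
    · exact Or.inl ⟨h0, by simp only [hc, h0, ↓reduceIte]⟩
    by_cases h1 : (i:ℕ) = 1
    · exact Or.inr (Or.inl ⟨h1, by simp only [hc, h0, h1, ↓reduceIte] <;> simp⟩)
    by_cases h2 : (i:ℕ) = 2
    · exact Or.inr (Or.inr (Or.inl ⟨h2, by simp only [hc, h0, h1, h2, ↓reduceIte] <;> simp⟩))
    · exact Or.inr (Or.inr (Or.inr ⟨by omega, by simp only [hc, h0, h1, h2, ↓reduceIte] <;> simp⟩))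
  have hinj : ∀ i j : Fin 4, c i = c j → i = j := by
    intro i j hij
    apply Fin.ext
    rcases ce i with ⟨hi1, hi2⟩ | ⟨hi1, hi2⟩ | ⟨hi1, hi2⟩ | ⟨hi1, hi2⟩ <;>
      rcases ce j with ⟨hj1, hj2⟩ | ⟨hj1, hj2⟩ | ⟨hj1, hj2⟩ | ⟨hj1, hj2⟩ <;>
      rw [hi2, hj2] at hij <;>
      first
        | omega
        | exact absurd hij hne1 | exact absurd hij.symm hne1
        | exact absurd hij hne2 | exact absurd hij.symm hne2
        | exact absurd hij hne3 | exact absurd hij.symm hne3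
        | exact absurd hij hne4 | exact absurd hij.symm hne4
        | exact absurd hij hne5 | exact absurd hij.symm hne5
        | exact absurd hij hxy | exact absurd hij.symm hxy
  have hadj : ∀ i j : Fin 4, G.Adj (c i) (c j) ↔
      ((i:ℕ)+1 = (j:ℕ) ∨ (j:ℕ)+1 = (i:ℕ) ∨ ((i:ℕ) = 0 ∧ (j:ℕ)+1 = 4) ∨ ((j:ℕ) = 0 ∧ (i:ℕ)+1 = 4)) := by
    intro i j
    rcases ce i with ⟨hi1, hi2⟩ | ⟨hi1, hi2⟩ | ⟨hi1, hi2⟩ | ⟨hi1, hi2⟩ <;>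
      rcases ce j with ⟨hj1, hj2⟩ | ⟨hj1, hj2⟩ | ⟨hj1, hj2⟩ | ⟨hj1, hj2⟩ <;>
      rw [hi2, hj2] <;>
      first
        | exact ⟨fun h => absurd h (G.irrefl), fun h => by omega⟩
        | (constructor
           · intro h
             first
               | exact absurd h hnxy | exact absurd h.symm hnxy
               | exact absurd h hna | exact absurd h.symm hna
               | omega
           · intro h
             first
               | exact hx0 | exact hx0.symm | exact hy0 | exact hy0.symm
               | exact hxm | exact hxm.symm | exact hym | exact hym.symm
               | omega)
  have hv : ∀ i : Fin 4, pp t ≠ c i := by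
    intro i
    rcases i with ⟨iv, hiv⟩
    interval_cases iv
    · rw [e0]; exact fun h => hxp t (by omega) h.symm
    · rw [e1]; exact fun h => by have := ppinj t 0 (by omega) (by omega) h; omega
    · rw [e2]; exact fun h => hyp' t (by omega) h.symm
    · rw [e3]; exact fun h => by have := ppinj t m (by omega) le_rfl h; omega
  rcases hcase with h1 | h1
  · refine wheel_gadget 4 (by norm_num) c (pp t) hinj hadj hv
      ⟨0, by omega⟩ ⟨1, by omega⟩ ⟨2, by omega⟩ (by simp) (by simp) (by simp) ?_ ?_ ?_
    · rw [e0]; exact hxt.symm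
    · rw [e1, ppadj t 0 (by omega) (by omega)]; omega
    · rw [e2]; exact hyt.symm
  · refine wheel_gadget 4 (by norm_num) c (pp t) hinj hadj hv
      ⟨0, by omega⟩ ⟨3, by omega⟩ ⟨2, by omega⟩ (by simp) (by simp) (by simp) ?_ ?_ ?_
    · rw [e0]; exact hxt.symm
    · rw [e3, ppadj t m (by omega) le_rfl]; omega
    · rw [e2]; exact hyt.symm

lemma cfg_wheelW3 (m : ℕ) (pp : ℕ → V)
    (ppinj : ∀ s t, s ≤ m → t ≤ m → pp s = pp t → s = t)
    (ppadj : ∀ s t, s ≤ m → t ≤ m → (G.Adj (pp s) (pp t) ↔ (s + 1 = t ∨ t + 1 = s)))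
    (x y : V) (hxy : x ≠ y) (hnxy : ¬ G.Adj x y)
    (hx0 : G.Adj x (pp 0)) (hxm : G.Adj x (pp m))
    (hy0 : G.Adj y (pp 0)) (hym : G.Adj y (pp m))
    (hxp : ∀ t, t ≤ m → x ≠ pp t) (hyp' : ∀ t, t ≤ m → y ≠ pp t)
    (l : ℕ) (hl2 : 2 ≤ l) (hlm : l + 2 ≤ m)
    (hx1 : G.Adj x (pp 1)) (hyl : G.Adj y (pp l))
    (hxmid : ∀ t, 1 < t → t ≤ l → ¬ G.Adj x (pp t))
    (hymid : ∀ t, 1 ≤ t → t < l → ¬ G.Adj y (pp t)) : HasInducedWheel G := by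
  set c : Fin (l+3) → V := fun i =>
    if (i:ℕ) = 0 then x else if (i:ℕ) ≤ l then pp (i:ℕ) else if (i:ℕ) = l+1 then y else pp m
    with hc
  have ce : ∀ i : Fin (l+3), ((i:ℕ) = 0 ∧ c i = x) ∨
      (1 ≤ (i:ℕ) ∧ (i:ℕ) ≤ l ∧ c i = pp (i:ℕ)) ∨
      ((i:ℕ) = l+1 ∧ c i = y) ∨ ((i:ℕ) = l+2 ∧ c i = pp m) := by
    intro i
    have hi := i.isLt
    by_cases h0 : (i:ℕ) = 0
    · exact Or.inl ⟨h0, by simp only [hc, h0, ↓reduceIte]⟩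
    by_cases h1 : (i:ℕ) ≤ l
    · exact Or.inr (Or.inl ⟨by omega, h1, by simp only [hc, h0, h1, ↓reduceIte] <;> simp⟩)
    by_cases h2 : (i:ℕ) = l+1
    · exact Or.inr (Or.inr (Or.inl ⟨h2, by simp only [hc, h0, h1, h2, ↓reduceIte] <;> simp⟩))
    · exact Or.inr (Or.inr (Or.inr ⟨by omega, by simp only [hc, h0, h1, h2, ↓reduceIte] <;> simp⟩))
  have hinj : ∀ i j : Fin (l+3), c i = c j → i = j := by
    intro i j hij
    apply Fin.ext
    rcases ce i with ⟨hi1, hi2⟩ | ⟨hi1a, hi1b, hi2⟩ | ⟨hi1, hi2⟩ | ⟨hi1, hi2⟩ <;>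
      rcases ce j with ⟨hj1, hj2⟩ | ⟨hj1a, hj1b, hj2⟩ | ⟨hj1, hj2⟩ | ⟨hj1, hj2⟩ <;>
      rw [hi2, hj2] at hij
    · omega
    · exact absurd hij (hxp _ (by omega))
    · exact absurd hij hxy
    · exact absurd hij (hxp m le_rfl)
    · exact absurd hij.symm (hxp _ (by omega))
    · have := ppinj _ _ (by omega) (by omega) hij; omega
    · exact absurd hij.symm (hyp' _ (by omega))
    · have := ppinj _ _ (by omega) (by omega) hij; omega
    · exact absurd hij.symm hxy
    · exact absurd hij (hyp' _ (by omega))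
    · omega
    · exact absurd hij (hyp' m le_rfl)
    · exact absurd hij.symm (hxp m le_rfl)
    · have := ppinj _ _ (by omega) (by omega) hij; omega
    · exact absurd hij.symm (hyp' m le_rfl)
    · omega
  have hadj : ∀ i j : Fin (l+3), G.Adj (c i) (c j) ↔
      ((i:ℕ)+1 = (j:ℕ) ∨ (j:ℕ)+1 = (i:ℕ) ∨ ((i:ℕ) = 0 ∧ (j:ℕ)+1 = l+3) ∨
        ((j:ℕ) = 0 ∧ (i:ℕ)+1 = l+3)) := by
    have adj2 : ∀ i j : Fin (l+3), (i:ℕ) ≤ (j:ℕ) → (G.Adj (c i) (c j) ↔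
        ((i:ℕ)+1 = (j:ℕ) ∨ (j:ℕ)+1 = (i:ℕ) ∨ ((i:ℕ) = 0 ∧ (j:ℕ)+1 = l+3) ∨
          ((j:ℕ) = 0 ∧ (i:ℕ)+1 = l+3))) := by
      intro i j hle
      have hi := i.isLt; have hj := j.isLt
      rcases ce i with ⟨hi1, hi2⟩ | ⟨hi1a, hi1b, hi2⟩ | ⟨hi1, hi2⟩ | ⟨hi1, hi2⟩ <;>
        rcases ce j with ⟨hj1, hj2⟩ | ⟨hj1a, hj1b, hj2⟩ | ⟨hj1, hj2⟩ | ⟨hj1, hj2⟩ <;>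
        rw [hi2, hj2]
      · exact ⟨fun h => absurd h (G.irrefl), fun h => by omega⟩
      · -- x vs mid
        rcases eq_or_ne ((j:ℕ)) 1 with h1 | h1
        · rw [h1]; exact ⟨fun _ => by omega, fun _ => hx1⟩
        · exact ⟨fun h => absurd h (hxmid _ (by omega) (by omega)), fun hcond => absurd hcond (by omega)⟩
      · exact ⟨fun h => absurd h hnxy, fun hcond => absurd hcond (by omega)⟩
      · exact ⟨fun _ => by omega, fun _ => hxm⟩
      · exact absurd hle (by omega)
      · rw [ppadj _ _ (by omega) (by omega)]; omega
      · -- mid vs y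
        rcases eq_or_ne ((i:ℕ)) l with h1 | h1
        · rw [h1]; exact ⟨fun _ => by omega, fun _ => hyl.symm⟩
        · exact ⟨fun h => absurd h.symm (hymid _ (by omega) (by omega)), fun hcond => absurd hcond (by omega)⟩
      · rw [ppadj _ _ (by omega) (by omega)]
        omega
      · exact absurd hle (by omega)
      · exact absurd hle (by omega)
      · exact ⟨fun h => absurd h (G.irrefl), fun h => by omega⟩
      · exact ⟨fun _ => by omega, fun _ => hym⟩
      · exact absurd hle (by omega)
      · exact absurd hle (by omega)
      · exact absurd hle (by omega)
      · exact ⟨fun h => absurd h (G.irrefl), fun h => by omega⟩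
    intro i j
    rcases le_total ((i:ℕ)) ((j:ℕ)) with h | h
    · exact adj2 i j h
    · rw [G.adj_comm, adj2 j i h]; omega
  have e0 : c ⟨0, by omega⟩ = x := rfl
  have e1 : c ⟨1, by omega⟩ = pp 1 := by
    simp only [hc, Fin.val_mk]
    rw [if_neg (by omega), if_pos (by omega)]
  have eL : c ⟨l+1, by omega⟩ = y := by
    simp only [hc, Fin.val_mk]
    rw [if_neg (by omega), if_neg (by omega)]
    simp
  have hv : ∀ i : Fin (l+3), pp 0 ≠ c i := by
    intro i
    rcases ce i with ⟨hi1, hi2⟩ | ⟨hi1a, hi1b, hi2⟩ | ⟨hi1, hi2⟩ | ⟨hi1, hi2⟩ <;> rw [hi2]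
    · exact fun h => hxp 0 (by omega) h.symm
    · exact fun h => by have := ppinj 0 _ (by omega) (by omega) h; omega
    · exact fun h => hyp' 0 (by omega) h.symm
    · exact fun h => by have := ppinj 0 m (by omega) le_rfl h; omega
  refine wheel_gadget (l+3) (by omega) c (pp 0) hinj hadj hv
    ⟨0, by omega⟩ ⟨1, by omega⟩ ⟨l+1, by omega⟩ ?_ ?_ ?_ ?_ ?_ ?_
  · exact Fin.ne_of_val_ne (by simp only [Fin.val_mk]; omega)
  · exact Fin.ne_of_val_ne (by simp only [Fin.val_mk]; omega)
  · exact Fin.ne_of_val_ne (by simp only [Fin.val_mk]; omega)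
  · rw [e0]; exact hx0.symm
  · rw [e1, ppadj 0 1 (by omega) (by omega)]; omega
  · rw [eL]; exact hy0.symm

lemma cfg_prism (m : ℕ) (hm3 : 3 ≤ m) (pp : ℕ → V)
    (ppinj : ∀ s t, s ≤ m → t ≤ m → pp s = pp t → s = t)
    (ppadj : ∀ s t, s ≤ m → t ≤ m → (G.Adj (pp s) (pp t) ↔ (s + 1 = t ∨ t + 1 = s)))
    (x y : V) (hxy : x ≠ y) (hnxy : ¬ G.Adj x y)
    (hx0 : G.Adj x (pp 0)) (hxm : G.Adj x (pp m))
    (hy0 : G.Adj y (pp 0)) (hym : G.Adj y (pp m))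
    (hxp : ∀ t, t ≤ m → x ≠ pp t) (hyp' : ∀ t, t ≤ m → y ≠ pp t)
    (hx : ∀ t, 1 ≤ t → t + 1 ≤ m → (G.Adj x (pp t) ↔ t = 1))
    (hy : ∀ t, 1 ≤ t → t + 1 ≤ m → (G.Adj y (pp t) ↔ t + 1 = m)) :
    HasInducedPrism G := by
  set q0 : Fin (1+1) → V := fun i => if (i:ℕ) = 0 then x else pp m with hq0
  set q1 : Fin (1+1) → V := fun i => if (i:ℕ) = 0 then pp 0 else y with hq1
  set q2 : Fin (m-2+1) → V := fun i => pp (1 + (i:ℕ)) with hq2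
  have q0e : ∀ i : Fin (1+1), ((i:ℕ) = 0 ∧ q0 i = x) ∨ ((i:ℕ) = 1 ∧ q0 i = pp m) := by
    intro i
    have hi := i.isLt
    by_cases h0 : (i:ℕ) = 0
    · exact Or.inl ⟨h0, by simp only [hq0, h0, ↓reduceIte]⟩
    · exact Or.inr ⟨by omega, by simp only [hq0, h0, ↓reduceIte]⟩
  have q1e : ∀ i : Fin (1+1), ((i:ℕ) = 0 ∧ q1 i = pp 0) ∨ ((i:ℕ) = 1 ∧ q1 i = y) := by
    intro i
    have hi := i.isLt
    by_cases h0 : (i:ℕ) = 0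
    · exact Or.inl ⟨h0, by simp only [hq1, h0, ↓reduceIte]⟩
    · exact Or.inr ⟨by omega, by simp only [hq1, h0, ↓reduceIte]⟩
  have q2e : ∀ i : Fin (m-2+1), q2 i = pp (1 + (i:ℕ)) := fun i => rfl
  have hpath0 : IsInducedPathOn G q0 := inducedPath1 x (pp m) hxm
  have hpath1 : IsInducedPathOn G q1 := by
    have h := inducedPath1 (pp 0) y hy0.symm
    exact h
  have hpath2 : IsInducedPathOn G q2 :=
    inducedPathSeg m pp ppinj ppadj 1 (m-2) (by omega)
  refine ⟨pick3 (α := fun _ => ℕ) 1 1 (m-2),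
    pick3 (α := fun kk => Fin ((pick3 (α := fun _ => ℕ) 1 1 (m-2)) kk + 1) → V) q0 q1 q2,
    ?_, ?_, ?_⟩
  · exact pick3_cases (C := fun kk nv => 1 ≤ nv) le_rfl le_rfl (by omega)
  · exact pick3_cases (α := fun kk => Fin ((pick3 (α := fun _ => ℕ) 1 1 (m-2)) kk + 1) → V)
      (C := fun kk q => IsInducedPathOn G q) hpath0 hpath1 hpath2
  · intro kk ll hne i j
    rcases kk with ⟨kv, hkv⟩; rcases ll with ⟨lv, hlv⟩
    interval_cases kv <;> interval_cases lv <;>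
      dsimp only [pick3]
    · exact (hne rfl).elim
    · -- (0,1) : q0 vs q1
      rcases q0e i with ⟨hi1, hi2⟩ | ⟨hi1, hi2⟩ <;> rcases q1e j with ⟨hj1, hj2⟩ | ⟨hj1, hj2⟩ <;>
        rw [hi2, hj2]
      · exact ⟨hxp 0 (by omega), ⟨fun _ => Or.inl ⟨hi1, hj1⟩, fun _ => hx0⟩⟩
      · exact ⟨hxy, ⟨fun h => absurd h hnxy, fun hc => by omega⟩⟩
      · refine ⟨fun h => by have := ppinj m 0 le_rfl (by omega) h; omega, ?_⟩
        rw [ppadj m 0 le_rfl (by omega)]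
        omega
      · exact ⟨(hyp' m le_rfl).symm, ⟨fun _ => Or.inr ⟨hi1, hj1⟩, fun _ => hym.symm⟩⟩
    · -- (0,2) : q0 vs q2
      have hj : (j:ℕ) < m - 2 + 1 := j.isLt
      rcases q0e i with ⟨hi1, hi2⟩ | ⟨hi1, hi2⟩ <;> rw [hi2, q2e j]
      · refine ⟨hxp (1 + (j:ℕ)) (by omega), ?_, ?_⟩
        · intro h
          have := (hx (1 + (j:ℕ)) (by omega) (by omega)).1 h
          exact Or.inl ⟨hi1, by omega⟩
        · intro hc
          exact (hx (1 + (j:ℕ)) (by omega) (by omega)).2 (by omega)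
      · refine ⟨fun h => by have := ppinj m (1 + (j:ℕ)) le_rfl (by omega) h; omega, ?_, ?_⟩
        · intro h
          rw [ppadj m (1 + (j:ℕ)) le_rfl (by omega)] at h
          exact Or.inr ⟨hi1, by omega⟩
        · intro hc
          rw [ppadj m (1 + (j:ℕ)) le_rfl (by omega)]
          omega
    · -- (1,0)
      rcases q1e i with ⟨hi1, hi2⟩ | ⟨hi1, hi2⟩ <;> rcases q0e j with ⟨hj1, hj2⟩ | ⟨hj1, hj2⟩ <;>
        rw [hi2, hj2]
      · exact ⟨fun h => hxp 0 (by omega) h.symm, ⟨fun _ => Or.inl ⟨hi1, hj1⟩, fun _ => hx0.symm⟩⟩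
      · refine ⟨fun h => by have := ppinj 0 m (by omega) le_rfl h; omega, ?_⟩
        rw [ppadj 0 m (by omega) le_rfl]
        omega
      · exact ⟨hxy.symm, ⟨fun h => absurd h.symm hnxy, fun hc => by omega⟩⟩
      · exact ⟨hyp' m le_rfl, ⟨fun _ => Or.inr ⟨hi1, hj1⟩, fun _ => hym⟩⟩
    · exact (hne rfl).elim
    · -- (1,2) : q1 vs q2
      have hj : (j:ℕ) < m - 2 + 1 := j.isLt
      rcases q1e i with ⟨hi1, hi2⟩ | ⟨hi1, hi2⟩ <;> rw [hi2, q2e j]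
      · refine ⟨fun h => by have := ppinj 0 (1 + (j:ℕ)) (by omega) (by omega) h; omega, ?_, ?_⟩
        · intro h
          rw [ppadj 0 (1 + (j:ℕ)) (by omega) (by omega)] at h
          exact Or.inl ⟨hi1, by omega⟩
        · intro hc
          rw [ppadj 0 (1 + (j:ℕ)) (by omega) (by omega)]
          omega
      · refine ⟨hyp' (1 + (j:ℕ)) (by omega), ?_, ?_⟩
        · intro h
          have := (hy (1 + (j:ℕ)) (by omega) (by omega)).1 h
          exact Or.inr ⟨hi1, by omega⟩
        · intro hc
          exact (hy (1 + (j:ℕ)) (by omega) (by omega)).2 (by omega)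
    · -- (2,0) : q2 vs q0
      have hi : (i:ℕ) < m - 2 + 1 := i.isLt
      rcases q0e j with ⟨hj1, hj2⟩ | ⟨hj1, hj2⟩ <;> rw [hj2, q2e i]
      · refine ⟨fun h => hxp (1 + (i:ℕ)) (by omega) h.symm, ?_, ?_⟩
        · intro h
          have := (hx (1 + (i:ℕ)) (by omega) (by omega)).1 h.symm
          exact Or.inl ⟨by omega, hj1⟩
        · intro hc
          exact ((hx (1 + (i:ℕ)) (by omega) (by omega)).2 (by omega)).symm
      · refine ⟨fun h => by have := ppinj (1 + (i:ℕ)) m (by omega) le_rfl h; omega, ?_, ?_⟩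
        · intro h
          rw [ppadj (1 + (i:ℕ)) m (by omega) le_rfl] at h
          exact Or.inr ⟨by omega, hj1⟩
        · intro hc
          rw [ppadj (1 + (i:ℕ)) m (by omega) le_rfl]
          omega
    · -- (2,1) : q2 vs q1
      have hi : (i:ℕ) < m - 2 + 1 := i.isLt
      rcases q1e j with ⟨hj1, hj2⟩ | ⟨hj1, hj2⟩ <;> rw [hj2, q2e i]
      · refine ⟨fun h => by have := ppinj (1 + (i:ℕ)) 0 (by omega) (by omega) h; omega, ?_, ?_⟩
        · intro h
          rw [ppadj (1 + (i:ℕ)) 0 (by omega) (by omega)] at h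
          exact Or.inl ⟨by omega, hj1⟩
        · intro hc
          rw [ppadj (1 + (i:ℕ)) 0 (by omega) (by omega)]
          omega
      · refine ⟨fun h => hyp' (1 + (i:ℕ)) (by omega) h.symm, ?_, ?_⟩
        · intro h
          have := (hy (1 + (i:ℕ)) (by omega) (by omega)).1 h.symm
          exact Or.inr ⟨by omega, hj1⟩
        · intro hc
          exact ((hy (1 + (i:ℕ)) (by omega) (by omega)).2 (by omega)).symm
    · exact (hne rfl).elim

lemma main_core (m : ℕ) (hm : 2 ≤ m) (pp : ℕ → V)
    (ppinj : ∀ s t, s ≤ m → t ≤ m → pp s = pp t → s = t)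
    (ppadj : ∀ s t, s ≤ m → t ≤ m → (G.Adj (pp s) (pp t) ↔ (s + 1 = t ∨ t + 1 = s)))
    (x y : V) (hxy : x ≠ y) (hnxy : ¬ G.Adj x y)
    (hx0 : G.Adj x (pp 0)) (hxm : G.Adj x (pp m))
    (hy0 : G.Adj y (pp 0)) (hym : G.Adj y (pp m))
    (hxp : ∀ t, t ≤ m → x ≠ pp t) (hyp' : ∀ t, t ≤ m → y ≠ pp t)
    (hnotheta : ¬ HasInducedTheta G) (hnowheel : ¬ HasInducedWheel G)
    (k l : ℕ) (hk1 : 1 ≤ k) (hkl : k < l) (hlm : l + 1 ≤ m)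
    (hxk : G.Adj x (pp k)) (hyl : G.Adj y (pp l))
    (hxl : ¬ G.Adj x (pp l)) (hyk : ¬ G.Adj y (pp k))
    (hnx : ∀ t, k < t → t < l → ¬ G.Adj x (pp t))
    (hny : ∀ t, k < t → t < l → ¬ G.Adj y (pp t)) :
    (∀ t, 1 ≤ t → t + 1 ≤ m → (G.Adj x (pp t) ↔ t = 1)) ∧
    (∀ t, 1 ≤ t → t + 1 ≤ m → (G.Adj y (pp t) ↔ t + 1 = m)) := by
  have hstep1 : k = 1 ∨ l + 1 = m := by
    by_contra hcon
    push_neg at hcon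
    obtain ⟨hc1, hc2⟩ := hcon
    refine hnotheta (cfg_theta m pp ppinj ppadj x y hxy hnxy hx0 hxm hy0 hym hxp hyp'
      k l (by omega) (by omega) (by omega) hxk hyl ?_ ?_)
    · intro t h1 h2
      rcases eq_or_ne t l with rfl | hne
      · exact hxl
      · exact hnx t h1 (by omega)
    · intro t h1 h2
      rcases eq_or_ne t k with rfl | hne
      · exact hyk
      · exact hny t (by omega) h2
  have hkeq : k = 1 := by
    by_contra hc
    have hlm' : l + 1 = m := by
      rcases hstep1 with h | h
      · exact absurd h hc
      · exact h
    set qq : ℕ → V := fun t => pp (m - t) with hqq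
    have qinj : ∀ s t, s ≤ m → t ≤ m → qq s = qq t → s = t := by
      intro s t hs ht h
      have := ppinj (m-s) (m-t) (by omega) (by omega) h
      omega
    have qadj : ∀ s t, s ≤ m → t ≤ m → (G.Adj (qq s) (qq t) ↔ (s + 1 = t ∨ t + 1 = s)) := by
      intro s t hs ht
      simp only [hqq]
      rw [ppadj (m-s) (m-t) (by omega) (by omega)]
      omega
    have hsub : ∀ t, t ≤ m → qq t = pp (m - t) := fun t _ => rfl
    apply hnowheel
    refine cfg_wheelW3 m qq qinj qadj y x hxy.symm (fun h => hnxy h.symm)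
      ?_ ?_ ?_ ?_ (fun t ht => by rw [hsub t ht]; exact hyp' (m-t) (by omega))
      (fun t ht => by rw [hsub t ht]; exact hxp (m-t) (by omega))
      (m - k) (by omega) (by omega) ?_ ?_ ?_ ?_
    · rw [hsub 0 (by omega), Nat.sub_zero]; exact hym
    · rw [hsub m le_rfl, Nat.sub_self]; exact hy0
    · rw [hsub 0 (by omega), Nat.sub_zero]; exact hxm
    · rw [hsub m le_rfl, Nat.sub_self]; exact hx0
    · rw [hsub 1 (by omega), (by omega : m - 1 = l)]; exact hyl
    · rw [hsub (m-k) (by omega), (by omega : m - (m - k) = k)]; exact hxk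
    · intro t h1 h2
      rw [hsub t (by omega)]
      rcases eq_or_ne (m - t) k with he | hne
      · rw [he]; exact hyk
      · exact hny (m - t) (by omega) (by omega)
    · intro t h1 h2
      rw [hsub t (by omega)]
      rcases eq_or_ne (m - t) l with he | hne
      · rw [he]; exact hxl
      · exact hnx (m - t) (by omega) (by omega)
  have hleq : l + 1 = m := by
    by_contra hc
    apply hnowheel
    refine cfg_wheelW3 m pp ppinj ppadj x y hxy hnxy hx0 hxm hy0 hym hxp hyp'
      l (by omega) (by omega) (by rw [← hkeq]; exact hxk) hyl ?_ ?_
    · intro t h1 h2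
      rcases eq_or_ne t l with rfl | hne
      · exact hxl
      · exact hnx t (by omega) (by omega)
    · intro t h1 h2
      rcases eq_or_ne t k with rfl | hne
      · exact hyk
      · exact hny t (by omega) h2
  constructor
  · intro t h1 h2
    constructor
    · intro hadj
      by_contra hne
      rcases eq_or_ne t l with rfl | hne2
      · exact hxl hadj
      · exact hnx t (by omega) (by omega) hadj
    · intro h
      rw [h, ← hkeq]
      exact hxk
  · intro t h1 h2
    constructor
    · intro hadj
      by_contra hne
      rcases eq_or_ne t k with rfl | hne2
      · exact hyk hadj
      · exact hny t (by omega) (by omega) hadj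
    · intro h
      rw [(by omega : t = l)]
      exact hyl

end ThetaAux

open ThetaAux in
/-- With `G` as in the 4-cycle-plus-path construction: if `G` contains no induced theta
and no induced wheel, then one of `b`, `d` is adjacent exactly to the internal vertex
`p 1`, and the other exactly to the internal vertex `p (m-1)` (so `G` is a prism). -/
theorem theta_wheel_free_realization_is_prism {V : Type*} [Fintype V]
    (G : SimpleGraph V) (b d : V) (m : ℕ) (hm : 2 ≤ m) (p : Fin (m + 1) → V)
    (hpath : IsInducedPathOn G p)
    (hbd : b ≠ d) (hnadj : ¬ G.Adj b d)
    (hbp : ∀ i, b ≠ p i) (hdp : ∀ i, d ≠ p i)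
    (hsurj : ∀ v : V, v = b ∨ v = d ∨ ∃ i, v = p i)
    (hba : G.Adj b (p 0)) (hbc : G.Adj b (p (Fin.last m)))
    (hda : G.Adj d (p 0)) (hdc : G.Adj d (p (Fin.last m)))
    (hbint : ∃ i, Internal i ∧ G.Adj b (p i))
    (hdint : ∃ i, Internal i ∧ G.Adj d (p i))
    (hnotheta : ¬ HasInducedTheta G) (hnowheel : ¬ HasInducedWheel G) :
    (((∀ i : Fin (m + 1), Internal i → (G.Adj b (p i) ↔ (i : ℕ) = 1)) ∧
        (∀ i : Fin (m + 1), Internal i → (G.Adj d (p i) ↔ (i : ℕ) = m - 1))) ∨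
      ((∀ i : Fin (m + 1), Internal i → (G.Adj d (p i) ↔ (i : ℕ) = 1)) ∧
        (∀ i : Fin (m + 1), Internal i → (G.Adj b (p i) ↔ (i : ℕ) = m - 1)))) ∧
      HasInducedPrism G := by
  classical
  obtain ⟨pinj, padj⟩ := hpath
  set pp : ℕ → V := fun t => p ⟨min t m, lt_of_le_of_lt (min_le_right t m) (Nat.lt_succ_self m)⟩ with hpp
  have ppt : ∀ t (ht : t ≤ m), pp t = p ⟨t, by omega⟩ := by
    intro t ht
    simp only [hpp]
    exact congrArg p (Fin.ext (by simp [Fin.val_mk, min_eq_left ht]))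
  have ppe : ∀ i : Fin (m+1), pp (i:ℕ) = p i := by
    intro i
    rw [ppt (i:ℕ) (by omega)]
  have ppinj : ∀ s t, s ≤ m → t ≤ m → pp s = pp t → s = t := by
    intro s t hs ht h
    rw [ppt s hs, ppt t ht] at h
    have := pinj h
    simpa using congrArg Fin.val this
  have ppadj : ∀ s t, s ≤ m → t ≤ m → (G.Adj (pp s) (pp t) ↔ (s + 1 = t ∨ t + 1 = s)) := by
    intro s t hs ht
    rw [ppt s hs, ppt t ht, padj]
  have h0 : pp 0 = p 0 := by
    rw [ppt 0 (by omega)]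
    exact congrArg p (Fin.ext (by simp))
  have hMm : pp m = p (Fin.last m) := by
    rw [ppt m le_rfl]
    rfl
  have hb0 : G.Adj b (pp 0) := by rw [h0]; exact hba
  have hbm : G.Adj b (pp m) := by rw [hMm]; exact hbc
  have hd0 : G.Adj d (pp 0) := by rw [h0]; exact hda
  have hdm : G.Adj d (pp m) := by rw [hMm]; exact hdc
  have hbp' : ∀ t, t ≤ m → b ≠ pp t := fun t ht => by rw [ppt t ht]; exact hbp _
  have hdp' : ∀ t, t ≤ m → d ≠ pp t := fun t ht => by rw [ppt t ht]; exact hdp _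
  have hbN : ∃ t, 1 ≤ t ∧ t + 1 ≤ m ∧ G.Adj b (pp t) := by
    obtain ⟨i, ⟨h1, h2⟩, hadj⟩ := hbint
    exact ⟨(i:ℕ), by omega, by have := i.isLt; omega, by rw [ppe i]; exact hadj⟩
  have hdN : ∃ t, 1 ≤ t ∧ t + 1 ≤ m ∧ G.Adj d (pp t) := by
    obtain ⟨i, ⟨h1, h2⟩, hadj⟩ := hdint
    exact ⟨(i:ℕ), by omega, by have := i.isLt; omega, by rw [ppe i]; exact hadj⟩
  have no_common : ∀ t, 1 ≤ t → t + 1 ≤ m → G.Adj b (pp t) → G.Adj d (pp t) → False := by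
    intro t h1 h2 hbt hdt
    by_cases hc : t = 1 ∨ t + 1 = m
    · exact hnowheel (cfg_wheel4 m hm pp ppinj ppadj b d hbd hnadj hb0 hbm hd0 hdm
        hbp' hdp' t h1 h2 hbt hdt hc)
    · push_neg at hc
      exact hnotheta (cfg_theta m pp ppinj ppadj b d hbd hnadj hb0 hbm hd0 hdm hbp' hdp'
        t t (by omega) le_rfl (by omega) hbt hdt
        (fun s hs1 hs2 => (by omega : False).elim)
        (fun s hs1 hs2 => (by omega : False).elim))
  have hm3 : 3 ≤ m := by
    by_contra hc
    obtain ⟨tb, htb1, htb2, htb⟩ := hbN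
    obtain ⟨td, htd1, htd2, htd⟩ := hdN
    have he1 : tb = 1 := by omega
    have he2 : td = 1 := by omega
    rw [he1] at htb; rw [he2] at htd
    exact no_common 1 le_rfl (by omega) htb htd
  have hQ : ∃ v, ∃ k l : ℕ, 1 ≤ k ∧ k < l ∧ l + 1 ≤ m ∧ l - k = v ∧
      ((G.Adj b (pp k) ∧ G.Adj d (pp l)) ∨ (G.Adj d (pp k) ∧ G.Adj b (pp l))) := by
    obtain ⟨tb, htb1, htb2, htb⟩ := hbN
    obtain ⟨td, htd1, htd2, htd⟩ := hdN
    rcases lt_trichotomy tb td with h | h | h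
    · exact ⟨td - tb, tb, td, htb1, h, htd2, rfl, Or.inl ⟨htb, htd⟩⟩
    · exact (no_common tb htb1 htb2 htb (h ▸ htd)).elim
    · exact ⟨tb - td, td, tb, htd1, h, htb2, rfl, Or.inr ⟨htd, htb⟩⟩
  obtain ⟨k, l, hk1, hkl, hlm, hdist, hbranch⟩ := Nat.find_spec hQ
  have hmin : ∀ v, v < Nat.find hQ → ¬ (∃ k l : ℕ, 1 ≤ k ∧ k < l ∧ l + 1 ≤ m ∧ l - k = v ∧
      ((G.Adj b (pp k) ∧ G.Adj d (pp l)) ∨ (G.Adj d (pp k) ∧ G.Adj b (pp l)))) :=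
    fun v hv => Nat.find_min hQ hv
  have hno_b : ∀ t, k < t → t < l → ¬ G.Adj b (pp t) := by
    intro t h1 h2 hadj
    rcases hbranch with ⟨hbk, hdl⟩ | ⟨hdk, hbl⟩
    · exact hmin (l - t) (by omega) ⟨t, l, by omega, by omega, by omega, rfl, Or.inl ⟨hadj, hdl⟩⟩
    · exact hmin (t - k) (by omega) ⟨k, t, by omega, by omega, by omega, rfl, Or.inr ⟨hdk, hadj⟩⟩
  have hno_d : ∀ t, k < t → t < l → ¬ G.Adj d (pp t) := by
    intro t h1 h2 hadj
    rcases hbranch with ⟨hbk, hdl⟩ | ⟨hdk, hbl⟩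
    · exact hmin (t - k) (by omega) ⟨k, t, by omega, by omega, by omega, rfl, Or.inl ⟨hbk, hadj⟩⟩
    · exact hmin (l - t) (by omega) ⟨t, l, by omega, by omega, by omega, rfl, Or.inr ⟨hadj, hbl⟩⟩
  rcases hbranch with ⟨hbk, hdl⟩ | ⟨hdk, hbl⟩
  · have hbl : ¬ G.Adj b (pp l) := fun h => no_common l (by omega) (by omega) h hdl
    have hdk : ¬ G.Adj d (pp k) := fun h => no_common k (by omega) (by omega) hbk h
    obtain ⟨hxall, hyall⟩ := main_core m hm pp ppinj ppadj b d hbd hnadj hb0 hbm hd0 hdm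
      hbp' hdp' hnotheta hnowheel k l hk1 hkl hlm hbk hdl hbl hdk hno_b hno_d
    refine ⟨Or.inl ⟨?_, ?_⟩, ?_⟩
    · intro i hi
      obtain ⟨h1, h2⟩ := hi
      have hlt := i.isLt
      rw [← ppe i]
      exact hxall (i:ℕ) (by omega) (by omega)
    · intro i hi
      obtain ⟨h1, h2⟩ := hi
      have hlt := i.isLt
      rw [← ppe i, hyall (i:ℕ) (by omega) (by omega)]
      omega
    · exact cfg_prism m hm3 pp ppinj ppadj b d hbd hnadj hb0 hbm hd0 hdm hbp' hdp' hxall hyall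
  · have hdl : ¬ G.Adj d (pp l) := fun h => no_common l (by omega) (by omega) hbl h
    have hbk : ¬ G.Adj b (pp k) := fun h => no_common k (by omega) (by omega) h hdk
    obtain ⟨hxall, hyall⟩ := main_core m hm pp ppinj ppadj d b hbd.symm
      (fun h => hnadj h.symm) hd0 hdm hb0 hbm hdp' hbp' hnotheta hnowheel
      k l hk1 hkl hlm hdk hbl hdl hbk hno_d hno_b
    refine ⟨Or.inr ⟨?_, ?_⟩, ?_⟩
    · intro i hi
      obtain ⟨h1, h2⟩ := hi
      have hlt := i.isLt
      rw [← ppe i]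
      exact hxall (i:ℕ) (by omega) (by omega)
    · intro i hi
      obtain ⟨h1, h2⟩ := hi
      have hlt := i.isLt
      rw [← ppe i, hyall (i:ℕ) (by omega) (by omega)]
      omega
    · exact cfg_prism m hm3 pp ppinj ppadj d b hbd.symm (fun h => hnadj h.symm)
        hd0 hdm hb0 hbm hdp' hbp' hxall hyall
end

section
/- Let G be a finite simple graph containing a clique C with vertices c₁,…,c_{3K} (K ≥ 9) and vertices z₁,…,z_{2K} outside C where z_i is adjacent to exactly c₁,…,c_i within C, and the z_i form a stable set. Suppose every vertex of G outside C ∪ {z₁,…,z_{2K}} has no neighbors in C, and the induced subgraph of G on V(G) \ (C ∪ {z₁,…,z_{2K}}) is the union of two induced cycles (in particular has chromatic number at most 6). Then C is the unique clique of size 3K in G. -/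
lemma cycle_clique_le_three {n : ℕ} (hn : 3 ≤ n) (s : Set (Fin n))
    (hs : (SimpleGraph.cycleGraph n).IsClique s) : s.ncard ≤ 3 := by
  rcases s.eq_empty_or_nonempty with rfl | ⟨v, hv⟩
  · simp
  obtain ⟨m, rfl⟩ : ∃ m, n = m + 3 := ⟨n - 3, by omega⟩
  have hsub : s ⊆ insert v ({v - 1, v + 1} : Set (Fin (m + 3))) := by
    intro x hx
    rcases eq_or_ne x v with rfl | h
    · exact Set.mem_insert _ _
    · have hadj := hs hx hv h
      rw [SimpleGraph.cycleGraph_adj'] at hadj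
      have h1v : ((1 : Fin (m + 3)) : ℕ) = 1 := Fin.val_one (m + 1)
      rcases hadj with h1 | h1
      · have hx1 : x - v = 1 := Fin.ext (by rw [h1, h1v])
        have : x = v + 1 := by
          have := eq_add_of_sub_eq hx1
          rw [this]; abel
        rw [this]
        exact Set.mem_insert_of_mem _ (Set.mem_insert_of_mem _ rfl)
      · have hx1 : v - x = 1 := Fin.ext (by rw [h1, h1v])
        have : x = v - 1 := by
          have hv1 := eq_add_of_sub_eq hx1
          rw [hv1]; abel
        rw [this]
        exact Set.mem_insert_of_mem _ (Set.mem_insert _ _)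
  calc s.ncard ≤ (insert v ({v - 1, v + 1} : Set (Fin (m + 3)))).ncard :=
        Set.ncard_le_ncard hsub (Set.toFinite _)
    _ ≤ ({v - 1, v + 1} : Set (Fin (m + 3))).ncard + 1 := Set.ncard_insert_le _ _
    _ ≤ (({v + 1} : Set (Fin (m + 3))).ncard + 1) + 1 := by
        exact Nat.add_le_add_right (Set.ncard_insert_le _ _) 1
    _ ≤ 3 := by simp

lemma inter_cycle_clique_le {V : Type*} (G : SimpleGraph V) (Q A : Set V)
    (hQ : G.IsClique Q) {n : ℕ} (hn : 3 ≤ n)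
    (e : G.induce A ≃g SimpleGraph.cycleGraph n) :
    (Q ∩ A).ncard ≤ 3 := by
  set S : Set A := Subtype.val ⁻¹' Q with hS
  have h1 : (G.induce A).IsClique S := by
    intro x hx y hy hxy
    exact hQ hx hy (fun h => hxy (Subtype.ext h))
  have h2 : (SimpleGraph.cycleGraph n).IsClique (e '' S) := by
    rintro a ⟨x, hx, rfl⟩ b ⟨y, hy, rfl⟩ hab
    have hxy : x ≠ y := fun h => hab (by rw [h])
    exact e.map_adj_iff.mpr (h1 hx hy hxy)
  have h4 : Q ∩ A = Subtype.val '' S := by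
    ext x
    constructor
    · rintro ⟨hxQ, hxA⟩; exact ⟨⟨x, hxA⟩, hxQ, rfl⟩
    · rintro ⟨⟨y, hyA⟩, hyQ, rfl⟩; exact ⟨hyQ, hyA⟩
  calc (Q ∩ A).ncard = S.ncard := by
        rw [h4, Set.ncard_image_of_injective _ Subtype.val_injective]
    _ = (e '' S).ncard := (Set.ncard_image_of_injective _ e.injective).symm
    _ ≤ 3 := cycle_clique_le_three hn _ h2

/-- Let `K ≥ 9` and let `G` contain a clique `C = {c 0, …, c (3K-1)}` and a stable set of
vertices `z 0, …, z (2K-1)` outside `C`, where `z i` is adjacent within `C` exactly to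
`c 0, …, c i`.  If every vertex outside `C ∪ {z i}` has no neighbors in `C`, and the
subgraph induced on the remaining vertices is the union of two induced cycles, then `C` is
the unique clique of size `3K` in `G`. -/
theorem unique_3K_clique {V : Type*} [Fintype V] (G : SimpleGraph V) (K : ℕ) (hK : 9 ≤ K)
    (c : Fin (3 * K) → V) (z : Fin (2 * K) → V)
    (hcinj : Function.Injective c) (hzinj : Function.Injective z)
    (hdisj : ∀ i j, c i ≠ z j)
    (hclique : ∀ i j, i ≠ j → G.Adj (c i) (c j))
    (hzc : ∀ i j, G.Adj (z i) (c j) ↔ (j : ℕ) ≤ (i : ℕ))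
    (hstable : ∀ i j, ¬ G.Adj (z i) (z j))
    (hout : ∀ v : V, (∀ i, v ≠ c i) → (∀ i, v ≠ z i) → ∀ j, ¬ G.Adj v (c j))
    (hcycles : ∃ A B : Set V,
      A ∪ B = {v : V | (∀ i, v ≠ c i) ∧ (∀ i, v ≠ z i)} ∧
      (∃ nA, 3 ≤ nA ∧ Nonempty (G.induce A ≃g SimpleGraph.cycleGraph nA)) ∧
      (∃ nB, 3 ≤ nB ∧ Nonempty (G.induce B ≃g SimpleGraph.cycleGraph nB))) :
    ∀ Q : Set V, G.IsClique Q → Q.ncard = 3 * K → Q = Set.range c := by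
  intro Q hQ hQcard
  obtain ⟨A, B, hAB, ⟨nA, hnA, ⟨eA⟩⟩, ⟨nB, hnB, ⟨eB⟩⟩⟩ := hcycles
  -- at most one z in Q
  have honez : ∀ i j : Fin (2 * K), z i ∈ Q → z j ∈ Q → i = j := by
    intro i j hi hj
    by_contra h
    exact hstable i j (hQ hi hj (fun hz => h (hzinj hz)))
  -- Claim 1: some c j ∈ Q
  have hcQ : ∃ j, c j ∈ Q := by
    by_contra h
    push_neg at h
    -- Q ⊆ (Q ∩ range z) ∪ (Q ∩ A) ∪ (Q ∩ B)
    have hsub : Q ⊆ (Q ∩ Set.range z) ∪ ((Q ∩ A) ∪ (Q ∩ B)) := by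
      intro q hq
      by_cases hz : ∃ i, q = z i
      · obtain ⟨i, rfl⟩ := hz
        exact Or.inl ⟨hq, i, rfl⟩
      · push_neg at hz
        have hc : ∀ i, q ≠ c i := fun i hqi => h i (hqi ▸ hq)
        have : q ∈ A ∪ B := by rw [hAB]; exact ⟨hc, hz⟩
        rcases this with hA | hB
        · exact Or.inr (Or.inl ⟨hq, hA⟩)
        · exact Or.inr (Or.inr ⟨hq, hB⟩)
    have hz1 : (Q ∩ Set.range z).ncard ≤ 1 := by
      rw [Set.ncard_le_one_iff_eq]
      rcases (Q ∩ Set.range z).eq_empty_or_nonempty with he | ⟨a, ha, i, rfl⟩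
      · exact Or.inl he
      · refine Or.inr ⟨z i, ?_⟩
        apply Set.eq_singleton_iff_unique_mem.mpr
        refine ⟨⟨ha, i, rfl⟩, ?_⟩
        rintro b ⟨hb, j, rfl⟩
        rw [honez j i hb ha]
    have hcard : Q.ncard ≤ 7 := by
      calc Q.ncard ≤ ((Q ∩ Set.range z) ∪ ((Q ∩ A) ∪ (Q ∩ B))).ncard :=
            Set.ncard_le_ncard hsub (Set.toFinite _)
        _ ≤ (Q ∩ Set.range z).ncard + ((Q ∩ A) ∪ (Q ∩ B)).ncard := Set.ncard_union_le _ _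
        _ ≤ (Q ∩ Set.range z).ncard + ((Q ∩ A).ncard + (Q ∩ B).ncard) :=
            Nat.add_le_add_left (Set.ncard_union_le _ _) _
        _ ≤ 1 + (3 + 3) := by
            gcongr
            · exact inter_cycle_clique_le G Q A hQ hnA eA
            · exact inter_cycle_clique_le G Q B hQ hnB eB
        _ = 7 := rfl
    omega
  obtain ⟨j0, hj0⟩ := hcQ
  -- Q ⊆ range c ∪ range z
  have hQcz : ∀ q ∈ Q, (∃ i, q = c i) ∨ (∃ i, q = z i) := by
    intro q hq
    by_contra h
    push_neg at h
    obtain ⟨hc, hz⟩ := h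
    have hne : q ≠ c j0 := hc j0
    exact hout q hc hz j0 (hQ hq hj0 hne)
  -- no z in Q
  have hnz : ∀ i, z i ∉ Q := by
    intro i hi
    have hsub : Q ⊆ insert (z i) (c '' {j : Fin (3 * K) | (j : ℕ) ≤ (i : ℕ)}) := by
      intro q hq
      rcases hQcz q hq with ⟨j, rfl⟩ | ⟨k, rfl⟩
      · have hne : c j ≠ z i := hdisj j i
        have hadj : G.Adj (z i) (c j) := (hQ hq hi hne).symm
        exact Set.mem_insert_of_mem _ ⟨j, (hzc i j).mp hadj, rfl⟩
      · rw [honez k i hq hi]; exact Set.mem_insert _ _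
    have himg : {j : Fin (3 * K) | (j : ℕ) ≤ (i : ℕ)} ⊆
        Set.range (fun t : Fin (2 * K) => (Fin.castLE (by omega) t : Fin (3 * K))) := by
      intro j hj
      have hj' : (j : ℕ) ≤ (i : ℕ) := hj
      have hi2 : (i : ℕ) < 2 * K := i.isLt
      exact ⟨⟨(j : ℕ), by omega⟩, by simp [Fin.ext_iff]⟩
    have h2 : ({j : Fin (3 * K) | (j : ℕ) ≤ (i : ℕ)}).ncard ≤ 2 * K := by
      calc _ ≤ (Set.range (fun t : Fin (2 * K) =>
              (Fin.castLE (by omega) t : Fin (3 * K)))).ncard :=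
            Set.ncard_le_ncard himg (Set.toFinite _)
        _ = (Set.univ : Set (Fin (2 * K))).ncard := by
            rw [← Set.image_univ, Set.ncard_image_of_injective _ (Fin.castLE_injective _)]
        _ = 2 * K := by rw [Set.ncard_univ, Nat.card_eq_fintype_card, Fintype.card_fin]
    have : Q.ncard ≤ 2 * K + 1 := by
      calc Q.ncard ≤ (insert (z i) (c '' {j : Fin (3 * K) | (j : ℕ) ≤ (i : ℕ)})).ncard :=
            Set.ncard_le_ncard hsub (Set.toFinite _)
        _ ≤ (c '' {j : Fin (3 * K) | (j : ℕ) ≤ (i : ℕ)}).ncard + 1 := Set.ncard_insert_le _ _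
        _ ≤ 2 * K + 1 := by
            rw [Set.ncard_image_of_injective _ hcinj]; omega
    omega
  -- Q ⊆ range c
  have hQc : Q ⊆ Set.range c := by
    intro q hq
    rcases hQcz q hq with ⟨j, rfl⟩ | ⟨k, rfl⟩
    · exact ⟨j, rfl⟩
    · exact absurd hq (hnz k)
  have hrange : (Set.range c).ncard = 3 * K := by
    rw [← Set.image_univ, Set.ncard_image_of_injective _ hcinj, Set.ncard_univ,
      Nat.card_eq_fintype_card, Fintype.card_fin]
  exact Set.eq_of_subset_of_ncard_le hQc (by omega) (Set.toFinite _)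
end
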